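/- arXiv:math/9709223 — 3 statements merged into one kernel-verified Lean document; each statement's English description precedes it below -/
import Mathlib

section
/- For every ẑ ∈ ℂ and every c₄ ∈ ℂ there exist r > 0 and a function y analytic on the punctured disk {z : 0 < |z−ẑ| < r} satisfying y''(z) = 6 y(z)² + z there, such that y(z) = (z−ẑ)^{−2} A(z) with A analytic on {|z−ẑ| < r}, A(ẑ) = 1, and the Laurent coefficients c_k of y at ẑ satisfy c_{−2} = 1, c_{−1} = c₀ = c₁ = 0, c₂ = −ẑ/10, c₃ = −1/6, and the coefficient of (z−ẑ)⁴ equals the prescribed value c₄. In particular, for each ẑ there is a one-complex-parameter family (parametrized by c₄) of solutions of P1 with a double pole at ẑ. -/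
open Topology Filter
open FormalMultilinearSeries

open Finset

/-- Laurent/Taylor coefficients of the P1 pole expansion. -/
noncomputable def p1c (zh c4 : ℂ) : ℕ → ℂ
  | 0 => 1
  | 1 => 0
  | 2 => 0
  | 3 => 0
  | 4 => -zh / 10
  | 5 => -1 / 6
  | 6 => c4
  | (n + 7) =>
      (6 * ∑ j ∈ (Finset.Ioo 0 (n + 7)).attach,
        p1c zh c4 j.1 * p1c zh c4 (n + 7 - j.1)) / (((n : ℂ) + 1) * ((n : ℂ) + 8))
  decreasing_by
  · have := (Finset.mem_Ioo.mp j.2).2; omega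
  · have := (Finset.mem_Ioo.mp j.2).1; omega

lemma p1c_seven (zh c4 : ℂ) (n : ℕ) (hn : 7 ≤ n) :
    ((n : ℂ) - 6) * ((n : ℂ) + 1) * p1c zh c4 n
      = 6 * ∑ j ∈ Finset.Ioo 0 n, p1c zh c4 j * p1c zh c4 (n - j) := by
  obtain ⟨m, rfl⟩ : ∃ m, n = m + 7 := ⟨n - 7, by omega⟩
  rw [show p1c zh c4 (m + 7) = (6 * ∑ j ∈ (Finset.Ioo 0 (m + 7)).attach,
        p1c zh c4 j.1 * p1c zh c4 (m + 7 - j.1)) / (((m : ℂ) + 1) * ((m : ℂ) + 8)) from by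
      rw [p1c]]
  rw [Finset.sum_attach (Finset.Ioo 0 (m + 7)) (fun j => p1c zh c4 j * p1c zh c4 (m + 7 - j))]
  have h1 : ((m : ℂ) + 1) ≠ 0 := by
    exact_mod_cast Nat.cast_add_one_ne_zero (R := ℂ) m
  have h8 : ((m : ℂ) + 8) ≠ 0 := by
    intro h
    have : ((m : ℝ) + 8) = 0 := by exact_mod_cast congrArg Complex.re h
    nlinarith [Nat.cast_nonneg (α := ℝ) m]
  push_cast
  field_simp
  ring

lemma p1c_rec (zh c4 : ℂ) (n : ℕ) :
    ((n : ℂ) - 2) * ((n : ℂ) - 3) * p1c zh c4 n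
      = 6 * ∑ j ∈ Finset.range (n + 1), p1c zh c4 j * p1c zh c4 (n - j)
        + (if n = 4 then zh else 0) + (if n = 5 then 1 else 0) := by
  match n with
  | 0 => simp [Finset.sum_range_succ, p1c]; norm_num
  | 1 => simp [Finset.sum_range_succ, p1c]
  | 2 => simp [Finset.sum_range_succ, p1c]
  | 3 => simp [Finset.sum_range_succ, p1c]
  | 4 => norm_num [Finset.sum_range_succ, p1c]; ring
  | 5 => norm_num [Finset.sum_range_succ, p1c]
  | 6 => norm_num [Finset.sum_range_succ, p1c]; ring
  | (m + 7) =>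
    set n := m + 7 with hn
    have h7 : 7 ≤ n := by omega
    have hsplit : ∑ j ∈ Finset.range (n + 1), p1c zh c4 j * p1c zh c4 (n - j)
        = p1c zh c4 n + (∑ j ∈ Finset.Ioo 0 n, p1c zh c4 j * p1c zh c4 (n - j))
          + p1c zh c4 n := by
      rw [Finset.sum_range_succ]
      have hr : Finset.range n = insert 0 (Finset.Ioo 0 n) := by
        ext j; simp only [Finset.mem_Ioo, Finset.mem_range, Finset.mem_insert]; omega
      rw [hr, Finset.sum_insert (by simp)]
      simp only [p1c, Nat.sub_zero, one_mul, Nat.sub_self, mul_one]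
    rw [hsplit]
    have h4 : n ≠ 4 := by omega
    have h5 : n ≠ 5 := by omega
    rw [if_neg h4, if_neg h5]
    have hs := p1c_seven zh c4 n h7
    linear_combination hs + (12 : ℂ) * (rfl : p1c zh c4 n = p1c zh c4 n)

lemma p1c_bound (zh c4 : ℂ) : ∃ M : ℝ, 1 ≤ M ∧ ∀ n, ‖p1c zh c4 n‖ ≤ M ^ n := by
  set M : ℝ := 1 + ∑ k ∈ Finset.range 11, ‖p1c zh c4 k‖ with hM
  have hM1 : 1 ≤ M := by
    have : 0 ≤ ∑ k ∈ Finset.range 11, ‖p1c zh c4 k‖ :=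
      Finset.sum_nonneg fun _ _ => norm_nonneg _
    linarith
  have hM0 : 0 ≤ M := by linarith
  have hsmall : ∀ k, k ≤ 10 → ‖p1c zh c4 k‖ ≤ M := by
    intro k hk
    have : ‖p1c zh c4 k‖ ≤ ∑ j ∈ Finset.range 11, ‖p1c zh c4 j‖ :=
      Finset.single_le_sum (fun _ _ => norm_nonneg _) (by simp; omega)
    linarith
  refine ⟨M, hM1, fun n => ?_⟩
  induction n using Nat.strong_induction_on with
  | _ n ih =>
    rcases le_or_gt n 10 with hn | hn
    · rcases Nat.eq_zero_or_pos n with rfl | hpos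
      · simp [p1c]
      · calc ‖p1c zh c4 n‖ ≤ M := hsmall n hn
        _ = M ^ 1 := (pow_one M).symm
        _ ≤ M ^ n := pow_le_pow_right₀ hM1 hpos
    · -- n ≥ 11
      have h7 : 7 ≤ n := by omega
      have hs := p1c_seven zh c4 n h7
      have hSbound : ‖∑ j ∈ Finset.Ioo 0 n, p1c zh c4 j * p1c zh c4 (n - j)‖
          ≤ (n - 1 : ℝ) * M ^ n := by
        calc ‖∑ j ∈ Finset.Ioo 0 n, p1c zh c4 j * p1c zh c4 (n - j)‖
            ≤ ∑ j ∈ Finset.Ioo 0 n, ‖p1c zh c4 j * p1c zh c4 (n - j)‖ := norm_sum_le _ _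
          _ ≤ ∑ j ∈ Finset.Ioo 0 n, M ^ n := by
              refine Finset.sum_le_sum fun j hj => ?_
              have hj' := Finset.mem_Ioo.mp hj
              rw [norm_mul]
              have h1 : ‖p1c zh c4 j‖ ≤ M ^ j := ih j (by omega)
              have h2 : ‖p1c zh c4 (n - j)‖ ≤ M ^ (n - j) := ih (n - j) (by omega)
              calc ‖p1c zh c4 j‖ * ‖p1c zh c4 (n - j)‖ ≤ M ^ j * M ^ (n - j) :=
                    mul_le_mul h1 h2 (norm_nonneg _) (pow_nonneg hM0 _)
                _ = M ^ n := by rw [← pow_add]; congr 1; omega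
          _ = (n - 1 : ℝ) * M ^ n := by
              rw [Finset.sum_const, Nat.card_Ioo, nsmul_eq_mul]
              have h1n : 1 ≤ n := by omega
              have : ((n - 1 : ℕ) : ℝ) = (n : ℝ) - 1 := by
                push_cast [Nat.cast_sub h1n]; ring
              simp only [Nat.sub_zero]
              rw [this]
      have hdnorm : ‖((n : ℂ) - 6) * ((n : ℂ) + 1)‖ = ((n : ℝ) - 6) * ((n : ℝ) + 1) := by
        rw [norm_mul]
        have e1 : ((n : ℂ) - 6) = (((n : ℝ) - 6 : ℝ) : ℂ) := by push_cast; ring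
        have e2 : ((n : ℂ) + 1) = (((n : ℝ) + 1 : ℝ) : ℂ) := by push_cast; ring
        have hnR : (11 : ℝ) ≤ (n : ℝ) := by exact_mod_cast hn
        rw [e1, e2, Complex.norm_real, Complex.norm_real, Real.norm_eq_abs, Real.norm_eq_abs,
          abs_of_nonneg (by linarith), abs_of_nonneg (by linarith)]
      have hd : ((n : ℝ) - 6) * ((n : ℝ) + 1) * ‖p1c zh c4 n‖ ≤ 6 * ((n - 1 : ℝ) * M ^ n) := by
        rw [← hdnorm, ← norm_mul, hs, norm_mul]
        have : ‖(6 : ℂ)‖ = 6 := by norm_num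
        rw [this]
        exact mul_le_mul_of_nonneg_left hSbound (by norm_num)
      have hnR : (11 : ℝ) ≤ (n : ℝ) := by exact_mod_cast hn
      have hdpos : 0 < ((n : ℝ) - 6) * ((n : ℝ) + 1) := by nlinarith
      have hcoef : 6 * ((n : ℝ) - 1) ≤ ((n : ℝ) - 6) * ((n : ℝ) + 1) := by nlinarith
      have hMn : 0 ≤ M ^ n := pow_nonneg hM0 _
      nlinarith [norm_nonneg (p1c zh c4 n)]

open FormalMultilinearSeries in
lemma ofScalars_radius_ge' {c : ℕ → ℂ} {r C : ℝ} (hr : 0 ≤ r)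
    (hC : ∀ n, ‖c n‖ * r ^ n ≤ C) :
    ENNReal.ofReal r ≤ (ofScalars ℂ c).radius := by
  rw [ENNReal.ofReal]
  refine (ofScalars ℂ c).le_radius_of_bound C fun n => ?_
  rw [Real.coe_toNNReal r hr, ofScalars_norm]
  exact hC n

open FormalMultilinearSeries in
lemma hasSum_deriv_ofScalars {f : ℂ → ℂ} {c : ℕ → ℂ} {zh : ℂ} {R : ENNReal}
    (hf : HasFPowerSeriesOnBall f (ofScalars ℂ c) zh R)
    {x : ℂ} (hx : x ∈ EMetric.ball (0 : ℂ) R) (hx0 : x ≠ 0) :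
    HasSum (fun n : ℕ => ((n : ℂ) + 1) * c (n + 1) * x ^ n) (deriv f (zh + x)) := by
  have hd := hf.fderiv
  have h1 := hd.hasSum hx
  have h2 := h1.mapL (ContinuousLinearMap.apply ℂ ℂ (1 : ℂ))
  simp only [ContinuousLinearMap.apply_apply] at h2
  have h3 : (fderiv ℂ f (zh + x)) 1 = deriv f (zh + x) := fderiv_apply_one_eq_deriv
  rw [h3] at h2
  convert h2 using 1
  case e'_3 => rfl
  funext n
  have hdiag := (ofScalars ℂ c).derivSeries_apply_diag n x
  have hlin : ((ofScalars ℂ c).derivSeries n fun _ => x) x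
      = x * ((ofScalars ℂ c).derivSeries n fun _ => x) 1 := by
    have : ((ofScalars ℂ c).derivSeries n fun _ => x) x
        = ((ofScalars ℂ c).derivSeries n fun _ => x) (x • (1 : ℂ)) := by
      simp
    rw [this, ContinuousLinearMap.map_smul, smul_eq_mul]
  rw [hlin] at hdiag
  have happ : (ofScalars ℂ c (n + 1)) (fun _ => x) = c (n + 1) * x ^ (n + 1) := by
    simpa using ofScalars_apply_eq c x (n + 1)
  rw [happ] at hdiag
  have : ((ofScalars ℂ c).derivSeries n fun _ => x) 1
      = ((n : ℂ) + 1) * c (n + 1) * x ^ n := by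
    have hx' : x * (((n : ℂ) + 1) * c (n + 1) * x ^ n) = (n + 1) • (c (n + 1) * x ^ (n + 1)) := by
      push_cast [nsmul_eq_mul]
      ring
    apply mul_left_cancel₀ hx0
    rw [hdiag, ← hx']
  rw [this]

lemma p1c_zero (zh c4 : ℂ) : p1c zh c4 0 = 1 := by simp [p1c]
lemma p1c_one (zh c4 : ℂ) : p1c zh c4 1 = 0 := by simp [p1c]
lemma p1c_two (zh c4 : ℂ) : p1c zh c4 2 = 0 := by simp [p1c]
lemma p1c_three (zh c4 : ℂ) : p1c zh c4 3 = 0 := by simp [p1c]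
lemma p1c_four (zh c4 : ℂ) : p1c zh c4 4 = -zh / 10 := by simp [p1c]
lemma p1c_five (zh c4 : ℂ) : p1c zh c4 5 = -1 / 6 := by simp [p1c]
lemma p1c_six (zh c4 : ℂ) : p1c zh c4 6 = c4 := by simp [p1c]

/-- For every `ẑ ∈ ℂ` and every `c₄ ∈ ℂ` there is a solution of Painlevé I with a double
pole at `ẑ`, with Laurent coefficients `c₋₂ = 1`, `c₋₁ = c₀ = c₁ = 0`, `c₂ = -ẑ/10`,
`c₃ = -1/6` and prescribed coefficient `c₄` of `(z - ẑ)⁴`. -/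
theorem painleveI_pole_family (zh c4 : ℂ) :
    ∃ (r : ℝ) (y A : ℂ → ℂ), 0 < r ∧
      (∀ z ∈ Metric.ball zh r \ {zh}, AnalyticAt ℂ y z ∧
        deriv (deriv y) z = 6 * (y z) ^ 2 + z) ∧
      (∀ z ∈ Metric.ball zh r, AnalyticAt ℂ A z) ∧
      (∀ z ∈ Metric.ball zh r \ {zh}, y z = A z / (z - zh) ^ 2) ∧
      A zh = 1 ∧
      iteratedDeriv 1 A zh = 0 ∧
      iteratedDeriv 2 A zh = 0 ∧
      iteratedDeriv 3 A zh = 0 ∧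
      iteratedDeriv 4 A zh / (Nat.factorial 4 : ℂ) = -zh / 10 ∧
      iteratedDeriv 5 A zh / (Nat.factorial 5 : ℂ) = -1 / 6 ∧
      iteratedDeriv 6 A zh / (Nat.factorial 6 : ℂ) = c4 := by
  obtain ⟨M, hM1, hMb⟩ := p1c_bound zh c4
  have hM0 : (0 : ℝ) < M := by linarith
  set c : ℕ → ℂ := p1c zh c4 with hc
  set b : ℕ → ℂ := fun n => ((n : ℂ) + 1) * c (n + 1) with hb
  set r : ℝ := 1 / (2 * M) with hrdef
  have hr0 : 0 < r := by positivity
  set R : ENNReal := ENNReal.ofReal r with hR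
  have hRpos : 0 < R := ENNReal.ofReal_pos.mpr hr0
  have hMr : M * r = 1 / 2 := by rw [hrdef]; field_simp
  -- radius bounds
  have hrA : R ≤ (ofScalars ℂ c).radius := by
    refine ofScalars_radius_ge' hr0.le (C := 1) fun n => ?_
    calc ‖c n‖ * r ^ n ≤ M ^ n * r ^ n :=
          mul_le_mul_of_nonneg_right (hMb n) (pow_nonneg hr0.le n)
      _ = (M * r) ^ n := (mul_pow M r n).symm
      _ = (1 / 2) ^ n := by rw [hMr]
      _ ≤ 1 := pow_le_one₀ (by norm_num) (by norm_num)
  have hrB : R ≤ (ofScalars ℂ b).radius := by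
    refine ofScalars_radius_ge' hr0.le (C := 2 * M) fun n => ?_
    have hnb : ‖b n‖ ≤ ((n : ℝ) + 1) * M ^ (n + 1) := by
      rw [hb]
      simp only [norm_mul]
      have h1 : ‖((n : ℂ) + 1)‖ = (n : ℝ) + 1 := by
        have : ((n : ℂ) + 1) = (((n : ℝ) + 1 : ℝ) : ℂ) := by push_cast; ring
        rw [this, Complex.norm_real, Real.norm_eq_abs, abs_of_nonneg (by positivity)]
      rw [h1]
      exact mul_le_mul_of_nonneg_left (hMb (n + 1)) (by positivity)
    have h2n : ((n : ℝ) + 1) ≤ 2 ^ n * 2 := by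
      have h := Nat.lt_two_pow_self (n := n)
      have h' : (n : ℝ) < 2 ^ n := by exact_mod_cast h
      have h1 : (1:ℝ) ≤ 2 ^ n := one_le_pow₀ (by norm_num)
      linarith
    calc ‖b n‖ * r ^ n ≤ (((n : ℝ) + 1) * M ^ (n + 1)) * r ^ n := by
          have := pow_nonneg hr0.le n
          nlinarith [norm_nonneg (b n)]
      _ = ((n : ℝ) + 1) * M * (M * r) ^ n := by rw [mul_pow]; ring
      _ = ((n : ℝ) + 1) * M * (1 / 2) ^ n := by rw [hMr]
      _ = ((n : ℝ) + 1) * (1 / 2) ^ n * M := by ring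
      _ ≤ 2 * M := by
          have hp : (0:ℝ) < 2 ^ n := by positivity
          have : ((n : ℝ) + 1) * (1 / 2) ^ n ≤ 2 := by
            rw [div_pow, one_pow, mul_one_div, div_le_iff₀ hp]
            linarith
          nlinarith
  -- the function A
  set A : ℂ → ℂ := fun z => (ofScalars ℂ c).sum (z - zh) with hA
  have hAball : HasFPowerSeriesOnBall A (ofScalars ℂ c) zh R := by
    refine ⟨hrA, hRpos, fun {y} hy => ?_⟩
    have : y ∈ EMetric.ball (0 : ℂ) (ofScalars ℂ c).radius :=
      lt_of_lt_of_le (by simpa [EMetric.mem_ball] using hy) hrA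
    simpa [hA] using (ofScalars ℂ c).hasSum this
  have hAanal : AnalyticOnNhd ℂ A (EMetric.ball zh R) := hAball.analyticOnNhd
  -- B series for deriv A
  have hderivAzh : deriv A zh = c 1 := by
    have := hAball.hasFPowerSeriesAt.deriv
    rw [this, ofScalars_apply_eq]
    simp
  have hBball : HasFPowerSeriesOnBall (deriv A) (ofScalars ℂ b) zh R := by
    refine ⟨hrB, hRpos, fun {y} hy => ?_⟩
    have hy' : y ∈ Metric.eball (0 : ℂ) R := by simpa [Metric.mem_eball] using hy
    rcases eq_or_ne y 0 with rfl | hy0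
    · have h0 : HasSum (fun n : ℕ => (ofScalars ℂ b n) fun _ => (0:ℂ))
          ((ofScalars ℂ b 0) fun _ => (0:ℂ)) := by
        refine hasSum_single 0 fun m hm => ?_
        rw [ofScalars_apply_eq]
        simp [zero_pow hm]
      have he : ((ofScalars ℂ b 0) fun _ => (0:ℂ)) = deriv A (zh + 0) := by
        rw [ofScalars_apply_eq]
        simp only [pow_zero, smul_eq_mul, mul_one, add_zero, hderivAzh, hb]
        norm_num
      rwa [he] at h0
    · have := hasSum_deriv_ofScalars hAball hy' hy0
      refine HasSum.congr_fun this fun n => ?_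
      rw [ofScalars_apply_eq]
      simp only [hb, smul_eq_mul]
  -- the key quadratic ODE identity for A
  have hKEY : ∀ z ∈ Metric.ball zh r, z ≠ zh →
      deriv (deriv A) z * (z - zh) ^ 2 - 4 * (deriv A z * (z - zh)) + 6 * A z
        = 6 * (A z) ^ 2 + z * (z - zh) ^ 4 := by
    intro z hz hzne
    set x : ℂ := z - zh with hx
    have hx0 : x ≠ 0 := sub_ne_zero.mpr hzne
    have hxr : ‖x‖ < r := by
      have := Metric.mem_ball.mp hz
      rwa [dist_eq_norm] at this
    have hxball : x ∈ Metric.eball (0 : ℂ) R := by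
      rw [hR, Metric.emetric_ball, Metric.mem_ball, dist_eq_norm, sub_zero]
      exact hxr
    have hzx : zh + x = z := by rw [hx]; ring
    have E1 : HasSum (fun n : ℕ => c n * x ^ n) (A z) := by
      have h := hAball.hasSum hxball
      rw [hzx] at h
      refine HasSum.congr_fun h fun n => ?_
      rw [ofScalars_apply_eq, smul_eq_mul]
    have E2 : HasSum (fun n : ℕ => ((n : ℂ) + 1) * c (n + 1) * x ^ n) (deriv A z) := by
      have h := hasSum_deriv_ofScalars hAball hxball hx0
      rwa [hzx] at h
    have E3 : HasSum (fun n : ℕ => ((n : ℂ) + 1) * b (n + 1) * x ^ n)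
        (deriv (deriv A) z) := by
      have h := hasSum_deriv_ofScalars hBball hxball hx0
      rwa [hzx] at h
    -- absolute convergence for the Cauchy product
    have hMx : 0 ≤ M * ‖x‖ := by positivity
    have hMx1 : M * ‖x‖ < 1 := by
      have : M * ‖x‖ < M * r := by
        exact mul_lt_mul_of_pos_left hxr hM0
      rw [hMr] at this
      linarith
    have hs1 : Summable (fun n : ℕ => ‖c n * x ^ n‖) := by
      refine Summable.of_nonneg_of_le (fun n => norm_nonneg _) (fun n => ?_)
        (summable_geometric_of_lt_one hMx hMx1)
      rw [norm_mul, norm_pow, mul_pow]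
      exact mul_le_mul_of_nonneg_right (hMb n) (pow_nonneg (norm_nonneg x) n)
    have hprod := (summable_norm_sum_mul_antidiagonal_of_summable_norm hs1 hs1).of_norm
    have htsum := tsum_mul_tsum_eq_tsum_sum_antidiagonal_of_summable_norm hs1 hs1
    rw [E1.tsum_eq] at htsum
    have PRraw := hprod.hasSum
    rw [← htsum] at PRraw
    have PR : HasSum (fun n : ℕ => (∑ j ∈ Finset.range (n + 1), c j * c (n - j)) * x ^ n)
        ((A z) ^ 2) := by
      have hsq : (A z) ^ 2 = A z * A z := sq (A z)
      rw [hsq]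
      refine HasSum.congr_fun PRraw fun n => ?_
      rw [Finset.Nat.sum_antidiagonal_eq_sum_range_succ_mk, Finset.sum_mul]
      refine Finset.sum_congr rfl fun j hj => ?_
      have hjn : j ≤ n := Nat.lt_succ_iff.mp (Finset.mem_range.mp hj)
      have : x ^ j * x ^ (n - j) = x ^ n := by
        rw [← pow_add]
        congr 1
        omega
      show c j * c (n - j) * x ^ n = c j * x ^ j * (c (n - j) * x ^ (n - j))
      rw [← this]
      ring
    -- the shifted sums
    have Hg2 : HasSum (fun n : ℕ => (n : ℂ) * ((n : ℂ) - 1) * c n * x ^ n)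
        (deriv (deriv A) z * x ^ 2) := by
      have h := E3.mul_right (x ^ 2)
      have h' : HasSum (fun n : ℕ =>
          ((n + 2 : ℕ) : ℂ) * (((n + 2 : ℕ) : ℂ) - 1) * c (n + 2) * x ^ (n + 2))
          (deriv (deriv A) z * x ^ 2) := by
        refine HasSum.congr_fun h fun n => ?_
        simp only [hb]
        push_cast
        ring
      have h2 := (hasSum_nat_add_iff (f := fun n : ℕ =>
          (n : ℂ) * ((n : ℂ) - 1) * c n * x ^ n) 2).mp h'
      simpa [Finset.sum_range_succ] using h2
    have Hg1 : HasSum (fun n : ℕ => (n : ℂ) * c n * x ^ n) (deriv A z * x) := by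
      have h := E2.mul_right x
      have h' : HasSum (fun n : ℕ => ((n + 1 : ℕ) : ℂ) * c (n + 1) * x ^ (n + 1))
          (deriv A z * x) := by
        refine HasSum.congr_fun h fun n => ?_
        push_cast
        ring
      have h2 := (hasSum_nat_add_iff (f := fun n : ℕ =>
          (n : ℂ) * c n * x ^ n) 1).mp h'
      simpa [Finset.sum_range_succ] using h2
    have HL : HasSum (fun n : ℕ => (n : ℂ) * ((n : ℂ) - 1) * c n * x ^ n
        - 4 * ((n : ℂ) * c n * x ^ n) + 6 * (c n * x ^ n))
        (deriv (deriv A) z * x ^ 2 - 4 * (deriv A z * x) + 6 * A z) :=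
      (Hg2.sub (Hg1.mul_left 4)).add (E1.mul_left 6)
    have HR : HasSum (fun n : ℕ => 6 * ((∑ j ∈ Finset.range (n + 1), c j * c (n - j)) * x ^ n)
        + (if n = 4 then zh * x ^ 4 else 0) + (if n = 5 then x ^ 5 else 0))
        (6 * (A z) ^ 2 + zh * x ^ 4 + x ^ 5) :=
      ((PR.mul_left 6).add (hasSum_ite_eq 4 (zh * x ^ 4))).add (hasSum_ite_eq 5 (x ^ 5))
    have hterm : ∀ n : ℕ, (n : ℂ) * ((n : ℂ) - 1) * c n * x ^ n
        - 4 * ((n : ℂ) * c n * x ^ n) + 6 * (c n * x ^ n)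
        = 6 * ((∑ j ∈ Finset.range (n + 1), c j * c (n - j)) * x ^ n)
          + (if n = 4 then zh * x ^ 4 else 0) + (if n = 5 then x ^ 5 else 0) := by
      intro n
      have h := p1c_rec zh c4 n
      rw [← hc] at h
      by_cases h4 : n = 4
      · subst h4
        norm_num at h ⊢
        linear_combination h * x ^ 4
      · by_cases h5 : n = 5
        · subst h5
          norm_num at h ⊢
          linear_combination h * x ^ 5
        · rw [if_neg h4, if_neg h5] at h ⊢
          linear_combination h * x ^ n
    have HR' : HasSum (fun n : ℕ => (n : ℂ) * ((n : ℂ) - 1) * c n * x ^ n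
        - 4 * ((n : ℂ) * c n * x ^ n) + 6 * (c n * x ^ n))
        (6 * (A z) ^ 2 + zh * x ^ 4 + x ^ 5) := HR.congr_fun hterm
    have hEq := HR'.unique HL
    have hfin : zh * x ^ 4 + x ^ 5 = z * x ^ 4 := by
      have : z = zh + x := hzx.symm
      rw [this]
      ring
    linear_combination -hEq + hfin
  -- now assemble everything
  have hball_eq : EMetric.ball zh R = Metric.ball zh r := by rw [hR]; exact Metric.emetric_ball
  set y : ℂ → ℂ := fun w => A w / (w - zh) ^ 2 with hy
  have hopen : IsOpen (Metric.ball zh r \ {zh}) :=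
    Metric.isOpen_ball.sdiff isClosed_singleton
  have hAat : ∀ z ∈ Metric.ball zh r, AnalyticAt ℂ A z := by
    intro z hz
    exact hAanal z (by rwa [hball_eq])
  have hdAat : ∀ z ∈ Metric.ball zh r, AnalyticAt ℂ (deriv A) z := by
    intro z hz
    exact hAanal.deriv z (by rwa [hball_eq])
  have hyd : ∀ w ∈ Metric.ball zh r \ {zh},
      HasDerivAt y (deriv A w / (w - zh) ^ 2 - 2 * A w / (w - zh) ^ 3) w := by
    intro w hw
    obtain ⟨hw1, hw2⟩ := hw
    have hwne : w - zh ≠ 0 := sub_ne_zero.mpr (by simpa using hw2)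
    have hAw : HasDerivAt A (deriv A w) w := ((hAat w hw1).differentiableAt).hasDerivAt
    have hgw : HasDerivAt (fun u : ℂ => (u - zh) ^ 2) (2 * (w - zh)) w := by
      have h1 : HasDerivAt (fun u : ℂ => u - zh) 1 w := (hasDerivAt_id w).sub_const zh
      have := h1.pow 2
      norm_num at this
      exact this
    have hdiv := hAw.div hgw (pow_ne_zero 2 hwne)
    refine hdiv.congr_deriv ?_
    field_simp
  have hcoeff : ∀ k : ℕ, iteratedDeriv k A zh = (Nat.factorial k : ℂ) * c k := by
    intro k
    have h := hAball.factorial_smul (1 : ℂ) k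
    rw [ofScalars_apply_eq] at h
    simp only [one_pow, smul_eq_mul, mul_one] at h
    rw [iteratedDeriv_eq_iteratedFDeriv, ← h, nsmul_eq_mul]
  refine ⟨r, y, A, hr0, ?_, hAat, ?_, ?_, ?_, ?_, ?_, ?_, ?_, ?_⟩
  · -- y analytic and satisfies P1
    intro z hz
    obtain ⟨hz1, hz2⟩ := hz
    have hzne : z ≠ zh := by simpa using hz2
    have hxne : z - zh ≠ 0 := sub_ne_zero.mpr hzne
    constructor
    · exact (hAat z hz1).div (((analyticAt_id).sub analyticAt_const).pow 2)
        (pow_ne_zero 2 hxne)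
    · -- second derivative computation
      have hstep : deriv (deriv y) z
          = deriv (fun w => deriv A w / (w - zh) ^ 2 - 2 * A w / (w - zh) ^ 3) z := by
        apply Filter.EventuallyEq.deriv_eq
        filter_upwards [hopen.mem_nhds ⟨hz1, hz2⟩] with w hw
        exact (hyd w hw).deriv
      have h1 : HasDerivAt (deriv A) (deriv (deriv A) z) z :=
        ((hdAat z hz1).differentiableAt).hasDerivAt
      have h2 : HasDerivAt A (deriv A z) z := ((hAat z hz1).differentiableAt).hasDerivAt
      have hg2 : HasDerivAt (fun u : ℂ => (u - zh) ^ 2) (2 * (z - zh)) z := by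
        have h0 : HasDerivAt (fun u : ℂ => u - zh) 1 z := (hasDerivAt_id z).sub_const zh
        have := h0.pow 2
        norm_num at this
        exact this
      have hg3 : HasDerivAt (fun u : ℂ => (u - zh) ^ 3) (3 * (z - zh) ^ 2) z := by
        have h0 : HasDerivAt (fun u : ℂ => u - zh) 1 z := (hasDerivAt_id z).sub_const zh
        have := h0.pow 3
        norm_num at this
        exact this
      have hfrac1 := h1.div hg2 (pow_ne_zero 2 hxne)
      have hfrac2 := (h2.const_mul (2 : ℂ)).div hg3 (pow_ne_zero 3 hxne)
      have htot := hfrac1.sub hfrac2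
      have htotd : deriv (fun w => deriv A w / (w - zh) ^ 2 - 2 * A w / (w - zh) ^ 3) z = _ :=
        htot.deriv
      rw [hstep, htotd]
      have hK := hKEY z hz1 hzne
      have hyz : y z = A z / (z - zh) ^ 2 := rfl
      rw [hyz]
      field_simp
      linear_combination hK
  · intro z hz
    rfl
  · -- A zh = 1
    have h := hcoeff 0
    rw [iteratedDeriv_zero] at h
    rw [h]
    simp [hc, p1c_zero]
  · rw [hcoeff 1]
    simp [hc, p1c_one]
  · rw [hcoeff 2]
    simp [hc, p1c_two]
  · rw [hcoeff 3]
    simp [hc, p1c_three]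
  · rw [hcoeff 4]
    rw [show c 4 = -zh / 10 from by rw [hc, p1c_four]]
    have : ((Nat.factorial 4 : ℕ) : ℂ) ≠ 0 := by norm_num [Nat.factorial]
    field_simp
  · rw [hcoeff 5]
    rw [show c 5 = -1 / 6 from by rw [hc, p1c_five]]
    have : ((Nat.factorial 5 : ℕ) : ℂ) ≠ 0 := by norm_num [Nat.factorial]
    field_simp
  · rw [hcoeff 6]
    rw [show c 6 = c4 from by rw [hc, p1c_six]]
    have : ((Nat.factorial 6 : ℕ) : ℂ) ≠ 0 := by norm_num [Nat.factorial]
    field_simp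
end

section
/- A solution of Painlevé's first equation with a double pole at ẑ is uniquely determined by ẑ and the fourth Laurent coefficient: if y₁ and y₂ are analytic on a punctured disk {0 < |z−ẑ| < r}, both satisfy y''(z) = 6 y(z)² + z, both have a double pole at ẑ with lim_{z→ẑ} (z−ẑ)² y_i(z) = 1, and the coefficients of (z−ẑ)⁴ in the Laurent expansions of y₁ and y₂ at ẑ coincide, then y₁ = y₂ on a punctured neighborhood of ẑ. -/
set_option maxHeartbeats 1000000

open Topology Filter

private lemma aD {f : ℂ → ℂ} {x : ℂ} (h : AnalyticAt ℂ f x) : AnalyticAt ℂ (deriv f) x := by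
  obtain ⟨s, hs, hf⟩ := h.eventually_analyticAt.exists_mem
  exact AnalyticOnNhd.deriv (fun z hz => hf z hz) x (mem_of_mem_nhds hs)

private lemma iter_add (x : ℂ) : ∀ (n : ℕ) (f g : ℂ → ℂ), AnalyticAt ℂ f x → AnalyticAt ℂ g x →
    iteratedDeriv n (fun z => f z + g z) x = iteratedDeriv n f x + iteratedDeriv n g x := by
  intro n
  induction n with
  | zero => intro f g _ _; simp
  | succ n ih =>
    intro f g hf hg
    have h1 : deriv (fun z => f z + g z) =ᶠ[𝓝 x] fun z => deriv f z + deriv g z := by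
      filter_upwards [hf.eventually_analyticAt, hg.eventually_analyticAt] with z hfz hgz
      exact deriv_add hfz.differentiableAt hgz.differentiableAt
    rw [iteratedDeriv_succ', h1.iteratedDeriv_eq n, ih _ _ (aD hf) (aD hg),
      ← iteratedDeriv_succ', ← iteratedDeriv_succ']

private lemma iter_cmul (x : ℂ) (c : ℂ) : ∀ (n : ℕ) (f : ℂ → ℂ), AnalyticAt ℂ f x →
    iteratedDeriv n (fun z => c * f z) x = c * iteratedDeriv n f x := by
  intro n
  induction n with
  | zero => intro f _; simp
  | succ n ih =>
    intro f hf
    have h1 : deriv (fun z => c * f z) =ᶠ[𝓝 x] fun z => c * deriv f z := by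
      filter_upwards [hf.eventually_analyticAt] with z hfz
      exact deriv_const_mul c hfz.differentiableAt
    rw [iteratedDeriv_succ', h1.iteratedDeriv_eq n, ih _ (aD hf), ← iteratedDeriv_succ']

private lemma iter_sub (x : ℂ) (n : ℕ) (f g : ℂ → ℂ) (hf : AnalyticAt ℂ f x)
    (hg : AnalyticAt ℂ g x) :
    iteratedDeriv n (fun z => f z - g z) x = iteratedDeriv n f x - iteratedDeriv n g x := by
  have h1 : (fun z => f z - g z) = fun z => f z + (-1 : ℂ) * g z := by funext z; ring
  rw [h1, iter_add x n f (fun z => (-1 : ℂ) * g z) hf (by exact analyticAt_const.mul hg),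
    iter_cmul x (-1) n g hg]
  ring

private lemma iter_pow_mul (x : ℂ) : ∀ (n k : ℕ) (f : ℂ → ℂ), AnalyticAt ℂ f x → n ≤ k →
    iteratedDeriv n (fun z => (z - x) ^ k * f z) x
      = if n = k then (n.factorial : ℂ) * f x else 0 := by
  intro n
  induction n with
  | zero =>
    intro k f hf hk
    rcases Nat.eq_zero_or_pos k with hk0 | hk0
    · subst hk0; simp
    · rw [iteratedDeriv_zero]
      simp [sub_self, zero_pow hk0.ne', if_neg (by omega : ¬ (0 = k))]
  | succ n ih =>
    intro k f hf hk
    obtain ⟨k, rfl⟩ : ∃ k', k = k' + 1 := ⟨k - 1, by omega⟩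
    have hst : deriv (fun z => (z - x) ^ (k + 1) * f z) =ᶠ[𝓝 x]
        fun z => ((k : ℂ) + 1) * ((z - x) ^ k * f z) + (z - x) ^ (k + 1) * deriv f z := by
      filter_upwards [hf.eventually_analyticAt] with z hz
      have h1 : HasDerivAt (fun z => (z - x) ^ (k + 1)) (((k : ℂ) + 1) * (z - x) ^ k) z := by
        have := ((hasDerivAt_id z).sub_const x).fun_pow (k + 1)
        simpa using this
      have h2 := h1.fun_mul hz.differentiableAt.hasDerivAt
      rw [h2.deriv]; ring
    have hp0 : AnalyticAt ℂ (fun z => (z - x) ^ k * f z) x :=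
      ((analyticAt_id.sub analyticAt_const).pow k).mul hf
    have hp1 : AnalyticAt ℂ (fun z => (z - x) ^ (k + 1) * deriv f z) x :=
      ((analyticAt_id.sub analyticAt_const).pow (k + 1)).mul (aD hf)
    rw [iteratedDeriv_succ', hst.iteratedDeriv_eq n,
      iter_add x n _ _ (analyticAt_const.fun_mul hp0) hp1,
      iter_cmul x _ n _ hp0,
      ih k f hf (by omega), ih (k + 1) (deriv f) (aD hf) (by omega)]
    have hnk : ¬ (n = k + 1) := by omega
    by_cases h : n = k
    · subst h
      simp [hnk, Nat.factorial_succ]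
      ring
    · have : ¬ (n + 1 = k + 1) := by omega
      simp [h, hnk, this]

private lemma ode_transfer (zh : ℂ) (r : ℝ) (y A : ℂ → ℂ)
    (hy : ∀ z ∈ Metric.ball zh r \ {zh}, AnalyticAt ℂ y z ∧
      deriv (deriv y) z = 6 * (y z) ^ 2 + z)
    (hA : ∀ z ∈ Metric.ball zh r, AnalyticAt ℂ A z)
    (hrep : ∀ z ∈ Metric.ball zh r \ {zh}, y z = A z / (z - zh) ^ 2) :
    ∀ z ∈ Metric.ball zh r \ {zh},
      (z - zh) ^ 2 * deriv (deriv A) z - 4 * (z - zh) * deriv A z + 6 * A z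
        = 6 * (A z) ^ 2 + z * (z - zh) ^ 4 := by
  set P := Metric.ball zh r \ {zh} with hPdef
  have hPopen : IsOpen P := Metric.isOpen_ball.sdiff isClosed_singleton
  have hsub : ∀ w ∈ P, w - zh ≠ 0 := fun w hw => sub_ne_zero.mpr hw.2
  -- step 1: first derivative
  have claim1 : ∀ w ∈ P, deriv y w = deriv A w / (w - zh) ^ 2 - 2 * A w / (w - zh) ^ 3 := by
    intro w hw
    have heq : y =ᶠ[𝓝 w] fun z => A z / (z - zh) ^ 2 := by
      filter_upwards [hPopen.mem_nhds hw] with z hz using hrep z hz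
    have hden : HasDerivAt (fun z => (z - zh) ^ 2) (2 * (w - zh)) w := by
      have := ((hasDerivAt_id w).sub_const zh).fun_pow 2
      simpa using this
    have hnum : HasDerivAt A (deriv A w) w := (hA w hw.1).differentiableAt.hasDerivAt
    have h2 := hnum.fun_div hden (pow_ne_zero 2 (hsub w hw))
    rw [heq.deriv_eq, h2.deriv]
    field_simp [hsub w hw]
  -- step 2: second derivative
  have claim2 : ∀ w ∈ P, deriv (deriv y) w =
      deriv (deriv A) w / (w - zh) ^ 2 - 4 * deriv A w / (w - zh) ^ 3
        + 6 * A w / (w - zh) ^ 4 := by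
    intro w hw
    have heq : deriv y =ᶠ[𝓝 w]
        fun z => deriv A z / (z - zh) ^ 2 - 2 * A z / (z - zh) ^ 3 := by
      filter_upwards [hPopen.mem_nhds hw] with z hz using claim1 z hz
    have hden2 : HasDerivAt (fun z => (z - zh) ^ 2) (2 * (w - zh)) w := by
      have := ((hasDerivAt_id w).sub_const zh).fun_pow 2
      simpa using this
    have hden3 : HasDerivAt (fun z => (z - zh) ^ 3) (3 * (w - zh) ^ 2) w := by
      have := ((hasDerivAt_id w).sub_const zh).fun_pow 3
      simpa using this
    have hA' : HasDerivAt (deriv A) (deriv (deriv A) w) w :=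
      (aD (hA w hw.1)).differentiableAt.hasDerivAt
    have hA0 : HasDerivAt (fun z => 2 * A z) (2 * deriv A w) w :=
      ((hA w hw.1).differentiableAt.hasDerivAt).const_mul 2
    have h1 := hA'.fun_div hden2 (pow_ne_zero 2 (hsub w hw))
    have h2 := hA0.fun_div hden3 (pow_ne_zero 3 (hsub w hw))
    have h3 := h1.fun_sub h2
    rw [heq.deriv_eq, h3.deriv]
    field_simp [hsub w hw]
    ring
  intro z hz
  have hode := (hy z hz).2
  rw [claim2 z hz, hrep z hz] at hode
  have ht := hsub z hz
  have key : ((z - zh) ^ 2 * deriv (deriv A) z - 4 * (z - zh) * deriv A z + 6 * A z)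
      - (6 * (A z) ^ 2 + z * (z - zh) ^ 4)
      = ((deriv (deriv A) z / (z - zh) ^ 2 - 4 * deriv A z / (z - zh) ^ 3
          + 6 * A z / (z - zh) ^ 4) - (6 * (A z / (z - zh) ^ 2) ^ 2 + z)) * (z - zh) ^ 4 := by
    field_simp [ht]
  rw [hode, sub_self, zero_mul] at key
  exact sub_eq_zero.mp key

/-- A solution of Painlevé I with a double pole at `ẑ` (with leading Laurent coefficient `1`)
is uniquely determined by `ẑ` and the coefficient of `(z - ẑ)⁴` in its Laurent expansion. -/
theorem painleveI_pole_uniqueness (zh : ℂ) (r : ℝ) (hr : 0 < r)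
    (y₁ y₂ A₁ A₂ : ℂ → ℂ)
    (hy₁ : ∀ z ∈ Metric.ball zh r \ {zh}, AnalyticAt ℂ y₁ z ∧
      deriv (deriv y₁) z = 6 * (y₁ z) ^ 2 + z)
    (hy₂ : ∀ z ∈ Metric.ball zh r \ {zh}, AnalyticAt ℂ y₂ z ∧
      deriv (deriv y₂) z = 6 * (y₂ z) ^ 2 + z)
    (hA₁ : ∀ z ∈ Metric.ball zh r, AnalyticAt ℂ A₁ z)
    (hA₂ : ∀ z ∈ Metric.ball zh r, AnalyticAt ℂ A₂ z)
    (hrep₁ : ∀ z ∈ Metric.ball zh r \ {zh}, y₁ z = A₁ z / (z - zh) ^ 2)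
    (hrep₂ : ∀ z ∈ Metric.ball zh r \ {zh}, y₂ z = A₂ z / (z - zh) ^ 2)
    (hlead₁ : A₁ zh = 1) (hlead₂ : A₂ zh = 1)
    (hpole₁ : Filter.Tendsto (fun z => (z - zh) ^ 2 * y₁ z) (𝓝[≠] zh) (𝓝 1))
    (hpole₂ : Filter.Tendsto (fun z => (z - zh) ^ 2 * y₂ z) (𝓝[≠] zh) (𝓝 1))
    (hcoeff : iteratedDeriv 6 A₁ zh = iteratedDeriv 6 A₂ zh) :
    ∃ r' : ℝ, 0 < r' ∧ r' ≤ r ∧ ∀ z ∈ Metric.ball zh r' \ {zh}, y₁ z = y₂ z := by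
  have hball : zh ∈ Metric.ball zh r := Metric.mem_ball_self hr
  set B : ℂ → ℂ := fun z => A₁ z - A₂ z with hBdef
  have hBan : ∀ w ∈ Metric.ball zh r, AnalyticAt ℂ B w := fun w hw =>
    (hA₁ w hw).sub (hA₂ w hw)
  by_cases hBz : ∀ᶠ z in 𝓝 zh, B z = 0
  · obtain ⟨ε, hε, hεs⟩ := Metric.eventually_nhds_iff_ball.mp hBz
    refine ⟨min ε r, lt_min hε hr, min_le_right _ _, ?_⟩
    intro z hz
    have hzr : z ∈ Metric.ball zh r \ {zh} :=
      ⟨Metric.ball_subset_ball (min_le_right ε r) hz.1, hz.2⟩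
    have hzε : z ∈ Metric.ball zh ε := Metric.ball_subset_ball (min_le_left ε r) hz.1
    have h12 : A₁ z = A₂ z := sub_eq_zero.mp (hεs z hzε)
    rw [hrep₁ z hzr, hrep₂ z hzr, h12]
  exfalso
  set P := Metric.ball zh r \ {zh} with hPdef
  have hPopen : IsOpen P := Metric.isOpen_ball.sdiff isClosed_singleton
  have E₁ := ode_transfer zh r y₁ A₁ hy₁ hA₁ hrep₁
  have E₂ := ode_transfer zh r y₂ A₂ hy₂ hA₂ hrep₂
  have hB' : ∀ w ∈ Metric.ball zh r, deriv B w = deriv A₁ w - deriv A₂ w := fun w hw =>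
    deriv_sub (hA₁ w hw).differentiableAt (hA₂ w hw).differentiableAt
  have hB'' : ∀ w ∈ Metric.ball zh r, deriv (deriv B) w
      = deriv (deriv A₁) w - deriv (deriv A₂) w := by
    intro w hw
    have heq : deriv B =ᶠ[𝓝 w] fun z => deriv A₁ z - deriv A₂ z := by
      filter_upwards [Metric.isOpen_ball.mem_nhds hw] with z hz using hB' z hz
    rw [heq.deriv_eq]
    exact deriv_sub (aD (hA₁ w hw)).differentiableAt (aD (hA₂ w hw)).differentiableAt
  have hODE : ∀ w ∈ P, (w - zh) ^ 2 * deriv (deriv B) w - 4 * (w - zh) * deriv B w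
      + (6 - 6 * (A₁ w + A₂ w)) * B w = 0 := by
    intro w hw
    rw [hB' w hw.1, hB'' w hw.1, hBdef]
    simp only
    linear_combination E₁ w hw - E₂ w hw
  -- order of B at zh
  have hord : analyticOrderAt B zh ≠ ⊤ :=
    fun h => hBz ((analyticOrderAt_eq_top).mp h)
  obtain ⟨n, hn⟩ := WithTop.ne_top_iff_exists.mp hord
  obtain ⟨g, hg, hgz, hBg'⟩ := ((hBan zh hball).analyticOrderAt_eq_natCast (n := n)).mp hn.symm
  have hBg : ∀ᶠ z in 𝓝 zh, B z = (z - zh) ^ n * g z := by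
    filter_upwards [hBg'] with z hz
    simpa [smul_eq_mul] using hz
  have hev : ∀ᶠ z in 𝓝 zh, (B z = (z - zh) ^ n * g z ∧ AnalyticAt ℂ g z)
      ∧ z ∈ Metric.ball zh r := by
    filter_upwards [hBg, hg.eventually_analyticAt, Metric.isOpen_ball.mem_nhds hball]
      with z h1 h2 h3
    exact ⟨⟨h1, h2⟩, h3⟩
  obtain ⟨U, hU, hUo, hzU⟩ := eventually_nhds_iff.mp hev
  have claim1 : ∀ w ∈ U, deriv B w
      = (n : ℂ) * (w - zh) ^ (n - 1) * g w + (w - zh) ^ n * deriv g w := by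
    intro w hw
    have heq : B =ᶠ[𝓝 w] fun z => (z - zh) ^ n * g z := by
      filter_upwards [hUo.mem_nhds hw] with z hz using (hU z hz).1.1
    have hpow : HasDerivAt (fun z => (z - zh) ^ n) ((n : ℂ) * (w - zh) ^ (n - 1)) w := by
      have := ((hasDerivAt_id w).sub_const zh).fun_pow n
      simpa using this
    have h2 := hpow.fun_mul (hU w hw).1.2.differentiableAt.hasDerivAt
    rw [heq.deriv_eq, h2.deriv]
  have claim2 : ∀ w ∈ U, deriv (deriv B) w
      = (n : ℂ) * ((n - 1 : ℕ) : ℂ) * (w - zh) ^ (n - 1 - 1) * g w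
        + 2 * (n : ℂ) * (w - zh) ^ (n - 1) * deriv g w
        + (w - zh) ^ n * deriv (deriv g) w := by
    intro w hw
    have heq : deriv B =ᶠ[𝓝 w] fun z =>
        (n : ℂ) * (z - zh) ^ (n - 1) * g z + (z - zh) ^ n * deriv g z := by
      filter_upwards [hUo.mem_nhds hw] with z hz using claim1 z hz
    have hgw := (hU w hw).1.2
    have hpow1 : HasDerivAt (fun z => (n : ℂ) * (z - zh) ^ (n - 1))
        ((n : ℂ) * (((n - 1 : ℕ) : ℂ) * (w - zh) ^ (n - 1 - 1))) w := by
      have := (((hasDerivAt_id w).sub_const zh).fun_pow (n - 1)).const_mul (n : ℂ)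
      simpa using this
    have hpown : HasDerivAt (fun z => (z - zh) ^ n) ((n : ℂ) * (w - zh) ^ (n - 1)) w := by
      have := ((hasDerivAt_id w).sub_const zh).fun_pow n
      simpa using this
    have h1 := hpow1.fun_mul hgw.differentiableAt.hasDerivAt
    have h2 := hpown.fun_mul (aD hgw).differentiableAt.hasDerivAt
    have h3 := h1.fun_add h2
    rw [heq.deriv_eq, h3.deriv]
    ring
  set φ : ℂ → ℂ := fun w =>
    ((n : ℂ) * ((n - 1 : ℕ) : ℂ) - 4 * (n : ℂ) + 6 - 6 * (A₁ w + A₂ w)) * g w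
      + (2 * (n : ℂ) - 4) * (w - zh) * deriv g w
      + (w - zh) ^ 2 * deriv (deriv g) w with hφdef
  have hφ0 : ∀ w ∈ U, w ≠ zh → φ w = 0 := by
    intro w hw hwzh
    have hwP : w ∈ P := ⟨(hU w hw).2, hwzh⟩
    have ht : w - zh ≠ 0 := sub_ne_zero.mpr hwzh
    have h0 := hODE w hwP
    rw [claim1 w hw, claim2 w hw, (hU w hw).1.1] at h0
    have l1 : (n : ℂ) * ((w - zh) * (w - zh) ^ (n - 1)) = (n : ℂ) * (w - zh) ^ n := by
      cases n with
      | zero => simp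
      | succ m => rw [Nat.add_sub_cancel, pow_succ]; ring
    have l2 : ((n - 1 : ℕ) : ℂ) * ((w - zh) ^ 2 * (w - zh) ^ (n - 1 - 1))
        = ((n - 1 : ℕ) : ℂ) * (w - zh) ^ n := by
      match n with
      | 0 => simp
      | 1 => simp
      | (m + 2) =>
        rw [show m + 2 - 1 - 1 = m from rfl, show m + 2 = (m + 1) + 1 from rfl, pow_succ, pow_succ]
        ring
    have l3 : (n : ℂ) * ((w - zh) ^ 2 * (w - zh) ^ (n - 1))
        = (n : ℂ) * ((w - zh) * (w - zh) ^ n) := by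
      cases n with
      | zero => simp
      | succ m => rw [Nat.add_sub_cancel, pow_succ]; ring
    have hfac : (w - zh) ^ n * φ w = 0 := by
      rw [hφdef]
      simp only
      linear_combination h0 - (n : ℂ) * g w * l2 + 4 * g w * l1 - 2 * deriv g w * l3
    rcases mul_eq_zero.mp hfac with h | h
    · exact absurd h (pow_ne_zero n ht)
    · exact h
  have hφan : AnalyticAt ℂ φ zh := by
    have t1 : AnalyticAt ℂ (fun w =>
        ((n : ℂ) * ((n - 1 : ℕ) : ℂ) - 4 * (n : ℂ) + 6 - 6 * (A₁ w + A₂ w)) * g w) zh :=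
      (analyticAt_const.sub (analyticAt_const.mul ((hA₁ zh hball).add (hA₂ zh hball)))).mul hg
    have t2 : AnalyticAt ℂ (fun w => (2 * (n : ℂ) - 4) * (w - zh) * deriv g w) zh :=
      (analyticAt_const.mul (analyticAt_id.sub analyticAt_const)).mul (aD hg)
    have t3 : AnalyticAt ℂ (fun w => (w - zh) ^ 2 * deriv (deriv g) w) zh :=
      ((analyticAt_id.sub analyticAt_const).pow 2).mul (aD (aD hg))
    exact (t1.add t2).add t3
  have h1 : Tendsto φ (𝓝[≠] zh) (𝓝 (φ zh)) := hφan.continuousAt.continuousWithinAt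
  have h2 : Tendsto φ (𝓝[≠] zh) (𝓝 0) := by
    have hev0 : ∀ᶠ w in 𝓝[≠] zh, φ w = 0 := by
      filter_upwards [mem_nhdsWithin_of_mem_nhds (hUo.mem_nhds hzU), self_mem_nhdsWithin]
        with w hwU hwne
      exact hφ0 w hwU hwne
    exact Tendsto.congr' (by filter_upwards [hev0] with w h using h.symm) tendsto_const_nhds
  have hφzh : φ zh = 0 := tendsto_nhds_unique h1 h2
  have hcoefzero : ((n : ℂ) * ((n - 1 : ℕ) : ℂ) - 4 * (n : ℂ) - 6) * g zh = 0 := by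
    rw [hφdef] at hφzh
    simp only [hlead₁, hlead₂, sub_self] at hφzh
    linear_combination hφzh
  have hcc : (n : ℂ) * ((n - 1 : ℕ) : ℂ) - 4 * (n : ℂ) - 6 = 0 :=
    (mul_eq_zero.mp hcoefzero).resolve_right hgz
  have hn6 : n = 6 := by
    cases n with
    | zero => norm_num at hcc
    | succ m =>
      rw [show m + 1 - 1 = m from rfl] at hcc
      push_cast at hcc
      have hfac2 : ((m : ℂ) - 5) * ((m : ℂ) + 2) = 0 := by linear_combination hcc
      rcases mul_eq_zero.mp hfac2 with h | h
      · have : (m : ℂ) = 5 := by linear_combination h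
        have : m = 5 := by exact_mod_cast this
        omega
      · have h2 : ((m : ℂ) + 2) ≠ 0 := by
          have h3 : ((m + 2 : ℕ) : ℂ) ≠ 0 := Nat.cast_ne_zero.mpr (by omega)
          push_cast at h3; exact h3
        exact absurd h h2
  subst hn6
  have h6 : iteratedDeriv 6 B zh = (720 : ℂ) * g zh := by
    have hBgE : B =ᶠ[𝓝 zh] fun z => (z - zh) ^ 6 * g z := hBg
    rw [hBgE.iteratedDeriv_eq 6, iter_pow_mul zh 6 6 g hg le_rfl]
    norm_num [Nat.factorial]
  have hzero : iteratedDeriv 6 B zh = 0 := by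
    rw [hBdef, iter_sub zh 6 A₁ A₂ (hA₁ zh hball) (hA₂ zh hball), hcoeff, sub_self]
  rw [hzero] at h6
  have : g zh = 0 := by
    rcases mul_eq_zero.mp h6.symm with h | h
    · norm_num at h
    · exact h
  exact hgz this
end

section
/- There exists a constant κ > 0 with the following property: for every z₀ ∈ ℂ and every function y analytic on a neighborhood of z₀ satisfying y''(z) = 6 y(z)² + z there, y extends to an analytic solution of P1 on the open disk of radius ρ = κ / max{1, |y(z₀)|^{1/2}, |y'(z₀)|^{1/3}, |z₀|^{1/4}} centered at z₀; equivalently, the radius of convergence of the Taylor series of y at z₀ is at least ρ. -/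
open Topology Filter

namespace P1Aux

/-! ### Power sums and their calculus -/

noncomputable def S (c : ℕ → ℂ) (w : ℂ) : ℂ := ∑' n, c n * w ^ n

lemma hA_nonneg {c : ℕ → ℂ} {A B : ℝ} (hc : ∀ n, ‖c n‖ ≤ A * B ^ n) : 0 ≤ A := by
  have := (norm_nonneg (c 0)).trans (hc 0)
  simpa using this

lemma summable_norm {c : ℕ → ℂ} {A B : ℝ} (hc : ∀ n, ‖c n‖ ≤ A * B ^ n) (hB : 0 ≤ B)
    {w : ℂ} (hw : ‖w‖ * B < 1) : Summable (fun n => ‖c n * w ^ n‖) := by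
  have hA : 0 ≤ A := hA_nonneg hc
  have hg : Summable (fun n : ℕ => A * (B * ‖w‖) ^ n) := by
    refine (summable_geometric_of_lt_one (by positivity) ?_).mul_left A
    rwa [mul_comm] at hw
  refine Summable.of_nonneg_of_le (fun n => norm_nonneg _) (fun n => ?_) hg
  rw [norm_mul, norm_pow, mul_pow]
  calc ‖c n‖ * ‖w‖ ^ n ≤ A * B ^ n * ‖w‖ ^ n :=
        mul_le_mul_of_nonneg_right (hc n) (by positivity)
    _ = A * (B ^ n * ‖w‖ ^ n) := by ring

lemma summable_S {c : ℕ → ℂ} {A B : ℝ} (hc : ∀ n, ‖c n‖ ≤ A * B ^ n) (hB : 0 ≤ B)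
    {w : ℂ} (hw : ‖w‖ * B < 1) : Summable fun n => c n * w ^ n :=
  (summable_norm hc hB hw).of_norm

lemma S_zero (c : ℕ → ℂ) : S c 0 = c 0 := by
  unfold S
  rw [tsum_eq_single 0]
  · simp
  · intro n hn
    simp [zero_pow hn]

lemma shift_bound {c : ℕ → ℂ} {A B : ℝ} (hB : 0 < B) (hc : ∀ n, ‖c n‖ ≤ A * B ^ n) (n : ℕ) :
    ‖((n : ℂ) + 1) * c (n + 1)‖ ≤ (A * B) * (2 * B) ^ n := by
  have hA : 0 ≤ A := hA_nonneg hc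
  rw [norm_mul]
  have h1 : ‖((n : ℂ) + 1)‖ = (n : ℝ) + 1 := by
    rw [show ((n : ℂ) + 1) = ((n + 1 : ℕ) : ℂ) by push_cast; ring, Complex.norm_natCast]
    push_cast; ring
  rw [h1]
  calc ((n : ℝ) + 1) * ‖c (n + 1)‖ ≤ ((n : ℝ) + 1) * (A * B ^ (n + 1)) :=
        mul_le_mul_of_nonneg_left (hc _) (by positivity)
    _ = (A * B) * (((n : ℝ) + 1) * B ^ n) := by ring
    _ ≤ (A * B) * ((2 : ℝ) ^ n * B ^ n) := by
        apply mul_le_mul_of_nonneg_left _ (by positivity)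
        apply mul_le_mul_of_nonneg_right _ (by positivity)
        exact_mod_cast (Nat.lt_two_pow_self (n := n))
    _ = (A * B) * (2 * B) ^ n := by rw [mul_pow]

lemma hasDerivAt_S {c : ℕ → ℂ} {A B : ℝ} (hB : 0 < B) (hc : ∀ n, ‖c n‖ ≤ A * B ^ n)
    {z₀ z : ℂ} (hz : ‖z - z₀‖ * B < 1) :
    HasDerivAt (fun w => S c (w - z₀)) (S (fun n => ((n : ℂ) + 1) * c (n + 1)) (z - z₀)) z := by
  have hA : 0 ≤ A := hA_nonneg hc
  obtain ⟨r, hzr, hrB⟩ : ∃ r : ℝ, ‖z - z₀‖ < r ∧ r * B < 1 := by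
    refine ⟨(‖z - z₀‖ + 1 / B) / 2, ?_, ?_⟩
    · have : ‖z - z₀‖ < 1 / B := (lt_div_iff₀ hB).mpr hz
      linarith
    · have h2 : (1 / B) * B = 1 := by field_simp
      nlinarith [hB, hz]
  have hr0 : 0 ≤ r := le_trans (norm_nonneg _) hzr.le
  have hu : Summable (fun n : ℕ => (n : ℝ) * (A * B ^ n) * r ^ (n - 1)) := by
    rw [← summable_nat_add_iff 1]
    have hq0 : (0:ℝ) ≤ B * r := by positivity
    have hq1 : B * r < 1 := by rwa [mul_comm] at hrB
    have h1 : Summable (fun n : ℕ => (n : ℝ) ^ 1 * (B * r) ^ n) :=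
      summable_pow_mul_geometric_of_norm_lt_one 1
        (by rw [Real.norm_eq_abs, abs_of_nonneg hq0]; exact hq1)
    have h2 : Summable (fun n : ℕ => (B * r) ^ n) := summable_geometric_of_lt_one hq0 hq1
    refine ((h1.add h2).mul_left (A * B)).congr fun n => ?_
    push_cast
    ring
  have key := hasDerivAt_tsum_of_isPreconnected hu (Metric.isOpen_ball (x := z₀) (ε := r))
    (convex_ball z₀ r).isPreconnected
    (g := fun n w => c n * (w - z₀) ^ n)
    (g' := fun n w => (n : ℂ) * c n * (w - z₀) ^ (n - 1))
    (fun n w _ => by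
      have h := ((hasDerivAt_id w).sub_const z₀).pow n
      simpa [mul_comm, mul_assoc, mul_left_comm] using h.const_mul (c n))
    (fun n w hw => by
      rw [Metric.mem_ball, dist_eq_norm] at hw
      calc ‖(n : ℂ) * c n * (w - z₀) ^ (n - 1)‖
          = (n : ℝ) * ‖c n‖ * ‖w - z₀‖ ^ (n - 1) := by
            rw [norm_mul, norm_mul, norm_pow, Complex.norm_natCast]
        _ ≤ (n : ℝ) * (A * B ^ n) * r ^ (n - 1) := by
            apply mul_le_mul
            · exact mul_le_mul_of_nonneg_left (hc n) (by positivity)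
            · exact pow_le_pow_left₀ (norm_nonneg _) hw.le _
            · positivity
            · positivity)
    (Metric.mem_ball_self (lt_of_le_of_lt (norm_nonneg (z - z₀)) hzr))
    (by
      apply Summable.of_norm
      simpa using summable_norm hc hB.le (w := z₀ - z₀) (by simp [hB]))
    (by rw [Metric.mem_ball, dist_eq_norm]; exact hzr)
  have hsum : (∑' n : ℕ, (n : ℂ) * c n * (z - z₀) ^ (n - 1))
      = S (fun n => ((n : ℂ) + 1) * c (n + 1)) (z - z₀) := by
    have hs : Summable (fun n : ℕ => (n : ℂ) * c n * (z - z₀) ^ (n - 1)) := by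
      apply Summable.of_norm
      refine Summable.of_nonneg_of_le (fun n => norm_nonneg _) (fun n => ?_) hu
      rw [norm_mul, norm_mul, norm_pow, Complex.norm_natCast]
      apply mul_le_mul
      · exact mul_le_mul_of_nonneg_left (hc n) (by positivity)
      · exact pow_le_pow_left₀ (norm_nonneg _) hzr.le _
      · positivity
      · positivity
    rw [hs.tsum_eq_zero_add]
    simp only [Nat.cast_zero, zero_mul, zero_add, Nat.add_sub_cancel]
    unfold S
    congr 1
    ext n
    push_cast
    ring
  rw [← hsum]
  exact key

lemma deriv2_S {c : ℕ → ℂ} {A B : ℝ} (hB : 0 < B) (hc : ∀ n, ‖c n‖ ≤ A * B ^ n)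
    {z₀ z : ℂ} (hz : ‖z - z₀‖ * (2 * B) < 1) :
    deriv (deriv (fun w => S c (w - z₀))) z
      = S (fun n => ((n : ℂ) + 1) * ((n : ℂ) + 2) * c (n + 2)) (z - z₀) := by
  have hB2 : (0:ℝ) < 2 * B := by positivity
  have hzB : ‖z - z₀‖ * B < 1 := by nlinarith [norm_nonneg (z - z₀)]
  have hmem : z ∈ Metric.ball z₀ (1 / B) := by
    rw [Metric.mem_ball, dist_eq_norm]
    exact (lt_div_iff₀ hB).mpr hzB
  have hev : deriv (fun w => S c (w - z₀))
      =ᶠ[𝓝 z] (fun w => S (fun n => ((n : ℂ) + 1) * c (n + 1)) (w - z₀)) := by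
    filter_upwards [Metric.isOpen_ball.mem_nhds hmem] with x hx
    rw [Metric.mem_ball, dist_eq_norm] at hx
    exact (hasDerivAt_S hB hc ((lt_div_iff₀ hB).mp hx)).deriv
  rw [hev.deriv_eq]
  have h2 := (hasDerivAt_S hB2 (shift_bound hB hc) (z₀ := z₀) (z := z) hz).deriv
  rw [h2]
  unfold S
  congr 1
  ext n
  push_cast
  ring

/-- Cauchy product of the square of a power sum. -/
lemma S_sq {c : ℕ → ℂ} {A B : ℝ} (hc : ∀ n, ‖c n‖ ≤ A * B ^ n) (hB : 0 ≤ B)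
    {w : ℂ} (hw : ‖w‖ * B < 1) :
    (S c w) ^ 2 = S (fun n => ∑ k ∈ Finset.range (n + 1), c k * c (n - k)) w := by
  rw [sq]
  unfold S
  rw [tsum_mul_tsum_eq_tsum_sum_range_of_summable_norm (summable_norm hc hB hw)
    (summable_norm hc hB hw)]
  congr 1
  ext n
  rw [Finset.sum_mul]
  apply Finset.sum_congr rfl
  intro k hk
  rw [Finset.mem_range] at hk
  have : w ^ k * w ^ (n - k) = w ^ n := by
    rw [← pow_add]
    congr 1
    omega
  calc c k * w ^ k * (c (n - k) * w ^ (n - k)) = c k * c (n - k) * (w ^ k * w ^ (n - k)) := by ring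
    _ = c k * c (n - k) * w ^ n := by rw [this]

noncomputable def conv (c : ℕ → ℂ) (n : ℕ) : ℂ := ∑ k ∈ Finset.range (n + 1), c k * c (n - k)

lemma conv_bound {c : ℕ → ℂ} {A B : ℝ} (hB : 0 < B) (hc : ∀ n, ‖c n‖ ≤ A * B ^ n) (n : ℕ) :
    ‖conv c n‖ ≤ (A * A) * (2 * B) ^ n := by
  have hA : 0 ≤ A := hA_nonneg hc
  calc ‖conv c n‖ ≤ ∑ k ∈ Finset.range (n + 1), ‖c k * c (n - k)‖ := norm_sum_le _ _
    _ ≤ ∑ k ∈ Finset.range (n + 1), (A * A) * B ^ n := by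
        apply Finset.sum_le_sum
        intro k hk
        rw [Finset.mem_range] at hk
        rw [norm_mul]
        calc ‖c k‖ * ‖c (n - k)‖ ≤ (A * B ^ k) * (A * B ^ (n - k)) :=
              mul_le_mul (hc k) (hc _) (norm_nonneg _) (by positivity)
          _ = (A * A) * (B ^ k * B ^ (n - k)) := by ring
          _ = (A * A) * B ^ n := by rw [← pow_add]; congr 2; omega
    _ = ((n : ℝ) + 1) * ((A * A) * B ^ n) := by
        rw [Finset.sum_const, Finset.card_range]
        push_cast
        ring
    _ ≤ (2 : ℝ) ^ n * ((A * A) * B ^ n) := by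
        apply mul_le_mul_of_nonneg_right _ (by positivity)
        exact_mod_cast (Nat.lt_two_pow_self (n := n))
    _ = (A * A) * (2 * B) ^ n := by rw [mul_pow]; ring

noncomputable def rhsCoef (z₀ : ℂ) (c : ℕ → ℂ) (n : ℕ) : ℂ :=
  6 * conv c n + (if n = 0 then z₀ else 0) + (if n = 1 then 1 else 0)

lemma rhs_expand {c : ℕ → ℂ} {A B : ℝ} (hB : 0 < B) (hc : ∀ n, ‖c n‖ ≤ A * B ^ n)
    (z₀ : ℂ) {w : ℂ} (hw : ‖w‖ * (2 * B) < 1) :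
    6 * (S c w) ^ 2 + (z₀ + w) = S (rhsCoef z₀ c) w := by
  have hwB : ‖w‖ * B < 1 := by nlinarith [norm_nonneg w]
  have hconv : ∀ n, ‖conv c n‖ ≤ (A * A) * (2 * B) ^ n := conv_bound hB hc
  have hs1 : Summable (fun n => conv c n * w ^ n) := summable_S hconv (by positivity) hw
  have hs2 : Summable (fun n => (if n = 0 then z₀ else 0) * w ^ n) := by
    apply summable_of_ne_finset_zero (s := {0})
    intro n hn
    simp only [Finset.mem_singleton] at hn
    simp [hn]
  have hs3 : Summable (fun n => (if n = 1 then (1:ℂ) else 0) * w ^ n) := by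
    apply summable_of_ne_finset_zero (s := {1})
    intro n hn
    simp only [Finset.mem_singleton] at hn
    simp [hn]
  have hsplit : S (rhsCoef z₀ c) w
      = 6 * ∑' n, conv c n * w ^ n
        + ∑' n, (if n = 0 then z₀ else 0) * w ^ n
        + ∑' n, (if n = 1 then (1:ℂ) else 0) * w ^ n := by
    unfold S rhsCoef
    rw [← tsum_mul_left (a := (6:ℂ))]
    rw [← Summable.tsum_add (hs1.mul_left 6) hs2, ← Summable.tsum_add ((hs1.mul_left 6).add hs2) hs3]
    congr 1
    ext n
    ring
  rw [hsplit]
  have e2 : ∑' n, (if n = 0 then z₀ else 0) * w ^ n = z₀ := by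
    rw [tsum_eq_single 0]
    · simp
    · intro n hn
      simp [hn]
  have e3 : ∑' n, (if n = 1 then (1:ℂ) else 0) * w ^ n = w := by
    rw [tsum_eq_single 1]
    · simp
    · intro n hn
      simp [hn]
  rw [e2, e3]
  rw [S_sq hc hB.le hwB]
  unfold S conv
  ring

/-! ### Uniqueness of power sum coefficients -/

lemma coeff_eq_zero {c : ℕ → ℂ} {A B δ : ℝ} (hB : 0 < B) (hδ : 0 < δ)
    (hc : ∀ n, ‖c n‖ ≤ A * B ^ n) (h0 : ∀ w : ℂ, ‖w‖ < δ → S c w = 0) : ∀ n, c n = 0 := by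
  have hA : 0 ≤ A := hA_nonneg hc
  intro m
  induction m using Nat.strong_induction_on with
  | _ m ih =>
  set δ' : ℝ := min (δ / 2) (1 / (2 * B)) with hδ'def
  have hδ'0 : 0 < δ' := by
    apply lt_min (by linarith) (by positivity)
  have hδ'B : δ' * B < 1 := by
    have h1 : δ' ≤ 1 / (2 * B) := min_le_right _ _
    have h2 : (1 / (2 * B)) * B = 1 / 2 := by field_simp
    nlinarith
  have hδ'δ : δ' < δ := lt_of_le_of_lt (min_le_left _ _) (by linarith)
  set G : ℂ → ℂ := fun w => S (fun n => c (n + m)) w with hGdef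
  have hcm : ∀ n, ‖c (n + m)‖ ≤ (A * B ^ m) * B ^ n := by
    intro n
    calc ‖c (n + m)‖ ≤ A * B ^ (n + m) := hc _
      _ = (A * B ^ m) * B ^ n := by rw [pow_add]; ring
  -- G is continuous on the ball of radius δ'
  have hGcont : ContinuousOn G (Metric.ball 0 δ') := by
    apply continuousOn_tsum (u := fun n => (A * B ^ m) * (B * δ') ^ n)
    · intro n
      exact (continuous_const.mul (continuous_pow n)).continuousOn
    · refine (summable_geometric_of_lt_one (by positivity) ?_).mul_left _
      rwa [mul_comm] at hδ'B
    · intro n w hw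
      rw [Metric.mem_ball, dist_zero_right] at hw
      rw [norm_mul, norm_pow, mul_pow]
      calc ‖c (n + m)‖ * ‖w‖ ^ n ≤ (A * B ^ m) * B ^ n * ‖w‖ ^ n :=
            mul_le_mul_of_nonneg_right (hcm n) (by positivity)
        _ ≤ (A * B ^ m) * B ^ n * δ' ^ n := by
            apply mul_le_mul_of_nonneg_left (pow_le_pow_left₀ (norm_nonneg _) hw.le _)
              (by positivity)
        _ = A * B ^ m * (B ^ n * δ' ^ n) := by ring
  have hG0 : G 0 = c m := by
    rw [hGdef]
    simpa using S_zero (fun n => c (n + m))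
  have hGz : ∀ w : ℂ, w ≠ 0 → ‖w‖ < δ' → G w = 0 := by
    intro w hw0 hwδ
    have hwB : ‖w‖ * B < 1 := by nlinarith [norm_nonneg w]
    have hsum : Summable (fun n => c n * w ^ n) := summable_S hc hB.le hwB
    have h2 : S c w = 0 := h0 w (lt_trans hwδ hδ'δ)
    have h3 : ∑ k ∈ Finset.range m, c k * w ^ k = 0 := by
      apply Finset.sum_eq_zero
      intro k hk
      rw [Finset.mem_range] at hk
      rw [ih k hk, zero_mul]
    have h4 := hsum.sum_add_tsum_nat_add m
    rw [h3, zero_add] at h4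
    -- h4 : ∑' n, c (n + m) * w ^ (n + m) = S c w
    have h5 : w ^ m * G w = 0 := by
      rw [hGdef]
      unfold S
      rw [← tsum_mul_left]
      calc (∑' n, w ^ m * (c (n + m) * w ^ n)) = ∑' n, c (n + m) * w ^ (n + m) := by
            congr 1; ext n; rw [pow_add]; ring
        _ = S c w := h4
        _ = 0 := h2
    have hwm : w ^ m ≠ 0 := pow_ne_zero _ hw0
    exact (mul_eq_zero.mp h5).resolve_left hwm
  -- conclude by continuity
  have hca : ContinuousAt G 0 := hGcont.continuousAt (Metric.ball_mem_nhds 0 hδ'0)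
  have ht1 : Tendsto G (𝓝[≠] (0:ℂ)) (𝓝 (c m)) := by
    rw [← hG0]
    exact hca.tendsto.mono_left nhdsWithin_le_nhds
  have ht2 : Tendsto G (𝓝[≠] (0:ℂ)) (𝓝 0) := by
    have hev : ∀ᶠ w in 𝓝[≠] (0:ℂ), G w = 0 := by
      have h5 : ∀ᶠ w in 𝓝 (0:ℂ), ‖w‖ < δ' := by
        have := Metric.ball_mem_nhds (0:ℂ) hδ'0
        filter_upwards [this] with w hw
        rwa [Metric.mem_ball, dist_zero_right] at hw
      filter_upwards [h5.filter_mono nhdsWithin_le_nhds, self_mem_nhdsWithin] with w hw1 hw2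
      exact hGz w hw2 hw1
    exact Tendsto.congr' (hev.mono fun w h => h.symm) tendsto_const_nhds
  exact tendsto_nhds_unique ht1 ht2

lemma coeff_unique {c d : ℕ → ℂ} {A₁ B₁ A₂ B₂ δ : ℝ} (hB₁ : 0 < B₁) (hB₂ : 0 < B₂) (hδ : 0 < δ)
    (hc : ∀ n, ‖c n‖ ≤ A₁ * B₁ ^ n) (hd : ∀ n, ‖d n‖ ≤ A₂ * B₂ ^ n)
    (h : ∀ w : ℂ, ‖w‖ < δ → S c w = S d w) : c = d := by
  have hA₁ : 0 ≤ A₁ := hA_nonneg hc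
  have hA₂ : 0 ≤ A₂ := hA_nonneg hd
  set B := max B₁ B₂ with hBdef
  have hB : 0 < B := lt_max_of_lt_left hB₁
  have he : ∀ n, ‖c n - d n‖ ≤ (A₁ + A₂) * B ^ n := by
    intro n
    calc ‖c n - d n‖ ≤ ‖c n‖ + ‖d n‖ := norm_sub_le _ _
      _ ≤ A₁ * B₁ ^ n + A₂ * B₂ ^ n := add_le_add (hc n) (hd n)
      _ ≤ A₁ * B ^ n + A₂ * B ^ n := by
          apply add_le_add
          · exact mul_le_mul_of_nonneg_left (pow_le_pow_left₀ hB₁.le (le_max_left _ _) n) hA₁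
          · exact mul_le_mul_of_nonneg_left (pow_le_pow_left₀ hB₂.le (le_max_right _ _) n) hA₂
      _ = (A₁ + A₂) * B ^ n := by ring
  set δ'' : ℝ := min δ (1 / (2 * B)) with hδ''def
  have hδ''0 : 0 < δ'' := lt_min hδ (by positivity)
  have h0 : ∀ w : ℂ, ‖w‖ < δ'' → S (fun n => c n - d n) w = 0 := by
    intro w hw
    have hwB₁ : ‖w‖ * B₁ < 1 := by
      have h1 : ‖w‖ < 1 / (2 * B) := lt_of_lt_of_le hw (min_le_right _ _)
      have h2 : B₁ ≤ B := le_max_left _ _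
      have := norm_nonneg w
      rw [lt_div_iff₀ (by positivity)] at h1
      nlinarith
    have hwB₂ : ‖w‖ * B₂ < 1 := by
      have h1 : ‖w‖ < 1 / (2 * B) := lt_of_lt_of_le hw (min_le_right _ _)
      have h2 : B₂ ≤ B := le_max_right _ _
      have := norm_nonneg w
      rw [lt_div_iff₀ (by positivity)] at h1
      nlinarith
    unfold S
    have hs1 : Summable (fun n => c n * w ^ n) := summable_S hc hB₁.le hwB₁
    have hs2 : Summable (fun n => d n * w ^ n) := summable_S hd hB₂.le hwB₂
    have : (fun n => (c n - d n) * w ^ n) = fun n => c n * w ^ n - d n * w ^ n := by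
      ext n; ring
    rw [this, Summable.tsum_sub hs1 hs2]
    have := h w (lt_of_lt_of_le hw (min_le_left _ _))
    unfold S at this
    rw [this, sub_self]
  funext n
  exact sub_eq_zero.mp (coeff_eq_zero hB hδ''0 he h0 n)

/-! ### The recursive coefficients of the Painlevé I solution -/

noncomputable def pc (z₀ a0 a1 : ℂ) : ℕ → ℂ
  | 0 => a0
  | 1 => a1
  | n+2 => (6 * ∑ k ∈ Finset.range (n+1), pc z₀ a0 a1 (min k n) * pc z₀ a0 a1 (n - k)
      + (if n = 0 then z₀ else 0) + (if n = 1 then 1 else 0)) / (((n:ℂ) + 2) * ((n:ℂ) + 1))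
  decreasing_by all_goals omega

lemma pc_zero (z₀ a0 a1 : ℂ) : pc z₀ a0 a1 0 = a0 := by rw [pc]

lemma pc_one (z₀ a0 a1 : ℂ) : pc z₀ a0 a1 1 = a1 := by rw [pc]

lemma pc_succ (z₀ a0 a1 : ℂ) (n : ℕ) :
    pc z₀ a0 a1 (n + 2)
      = (6 * ∑ k ∈ Finset.range (n+1), pc z₀ a0 a1 k * pc z₀ a0 a1 (n - k)
          + (if n = 0 then z₀ else 0) + (if n = 1 then 1 else 0))
        / (((n:ℂ) + 2) * ((n:ℂ) + 1)) := by
  rw [pc]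
  congr 4
  apply Finset.sum_congr rfl
  intro k hk
  rw [Finset.mem_range] at hk
  rw [min_eq_left (by omega)]

lemma den_ne_zero (n : ℕ) : (((n:ℂ) + 2) * ((n:ℂ) + 1)) ≠ 0 := by
  apply mul_ne_zero
  · intro h
    have : ((n:ℂ) + 2) = ((n + 2 : ℕ) : ℂ) := by push_cast; ring
    rw [this] at h
    exact_mod_cast h
  · intro h
    have : ((n:ℂ) + 1) = ((n + 1 : ℕ) : ℂ) := by push_cast; ring
    rw [this] at h
    exact_mod_cast h

/-- The recursion written multiplicatively: this is exactly `rhsCoef` vs second-derivative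
coefficients. -/
lemma pc_recursion (z₀ a0 a1 : ℂ) (n : ℕ) :
    ((n:ℂ) + 1) * ((n:ℂ) + 2) * pc z₀ a0 a1 (n + 2) = rhsCoef z₀ (pc z₀ a0 a1) n := by
  rw [pc_succ]
  rw [mul_comm ((n:ℂ) + 1) ((n:ℂ) + 2)]
  rw [mul_div_cancel₀ _ (den_ne_zero n)]
  rfl

/-- Uniqueness: any sequence satisfying the same recursion with the same seeds equals `pc`. -/
lemma pc_unique (z₀ a0 a1 : ℂ) (q : ℕ → ℂ) (h0 : q 0 = a0) (h1 : q 1 = a1)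
    (hrec : ∀ n : ℕ, ((n:ℂ) + 1) * ((n:ℂ) + 2) * q (n + 2) = rhsCoef z₀ q n) :
    ∀ n, q n = pc z₀ a0 a1 n := by
  intro n
  induction n using Nat.strong_induction_on with
  | _ n ih =>
  match n with
  | 0 => rw [h0, pc_zero]
  | 1 => rw [h1, pc_one]
  | (m+2) =>
    have hq : q (m + 2) = rhsCoef z₀ q m / (((m:ℂ) + 2) * ((m:ℂ) + 1)) := by
      rw [eq_div_iff (den_ne_zero m), ← hrec m]
      ring
    rw [hq, pc_succ]
    have hconv : rhsCoef z₀ q m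
        = 6 * ∑ k ∈ Finset.range (m+1), pc z₀ a0 a1 k * pc z₀ a0 a1 (m - k)
          + (if m = 0 then z₀ else 0) + (if m = 1 then 1 else 0) := by
      unfold rhsCoef conv
      congr 2
      · congr 1
        apply Finset.sum_congr rfl
        intro k hk
        rw [Finset.mem_range] at hk
        rw [ih k (by omega), ih (m - k) (by omega)]
    rw [hconv]

/-- The majorant bound on the recursive coefficients. -/
lemma pc_bound {z₀ a0 a1 : ℂ} {M : ℝ} (hM : 1 ≤ M) (h0 : ‖a0‖ ≤ M ^ 2)
    (h1 : ‖a1‖ ≤ M ^ 3) (hz0 : ‖z₀‖ ≤ M ^ 4) :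
    ∀ n, ‖pc z₀ a0 a1 n‖ ≤ M ^ 2 * (2 * M) ^ n := by
  have hM0 : (0:ℝ) < M := by linarith
  intro n
  induction n using Nat.strong_induction_on with
  | _ n ih =>
  match n with
  | 0 => simpa [pc_zero] using h0
  | 1 => simpa [pc_one] using (by nlinarith : ‖a1‖ ≤ M ^ 2 * (2 * M))
  | (m+2) =>
    have hP : (1:ℝ) ≤ M ^ 4 * (2 * M) ^ m := by
      have h4 : (1:ℝ) ≤ M ^ 4 := one_le_pow₀ hM
      have hg : (1:ℝ) ≤ (2 * M) ^ m := one_le_pow₀ (by linarith : (1:ℝ) ≤ 2 * M)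
      nlinarith
    set P : ℝ := M ^ 4 * (2 * M) ^ m with hPdef
    have hP0 : 0 < P := by positivity
    have hsum : ‖∑ k ∈ Finset.range (m+1), pc z₀ a0 a1 k * pc z₀ a0 a1 (m - k)‖
        ≤ ((m:ℝ) + 1) * P := by
      calc ‖∑ k ∈ Finset.range (m+1), pc z₀ a0 a1 k * pc z₀ a0 a1 (m - k)‖
          ≤ ∑ k ∈ Finset.range (m+1), ‖pc z₀ a0 a1 k * pc z₀ a0 a1 (m - k)‖ := norm_sum_le _ _
        _ ≤ ∑ k ∈ Finset.range (m+1), P := by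
            apply Finset.sum_le_sum
            intro k hk
            rw [Finset.mem_range] at hk
            rw [norm_mul]
            calc ‖pc z₀ a0 a1 k‖ * ‖pc z₀ a0 a1 (m - k)‖
                ≤ (M ^ 2 * (2 * M) ^ k) * (M ^ 2 * (2 * M) ^ (m - k)) :=
                  mul_le_mul (ih k (by omega)) (ih (m - k) (by omega)) (norm_nonneg _)
                    (by positivity)
              _ = M ^ 4 * ((2 * M) ^ k * (2 * M) ^ (m - k)) := by ring
              _ = P := by rw [← pow_add, hPdef]; congr 2; omega
        _ = ((m:ℝ) + 1) * P := by
            rw [Finset.sum_const, Finset.card_range]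
            push_cast
            ring
    have hite1 : ‖(if m = 0 then z₀ else 0 : ℂ)‖ ≤ P := by
      split
      · calc ‖z₀‖ ≤ M ^ 4 := hz0
          _ ≤ P := by nlinarith [one_le_pow₀ (show (1:ℝ) ≤ 2*M by linarith) (n := m)]
      · simpa using hP0.le
    have hite2 : ‖(if m = 1 then (1:ℂ) else 0)‖ ≤ P := by
      split
      · simpa using hP
      · simpa using hP0.le
    rw [pc_succ, norm_div]
    have hden : ‖(((m:ℂ) + 2) * ((m:ℂ) + 1))‖ = ((m:ℝ) + 2) * ((m:ℝ) + 1) := by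
      rw [norm_mul]
      have e1 : ((m:ℂ) + 2) = ((m + 2 : ℕ) : ℂ) := by push_cast; ring
      have e2 : ((m:ℂ) + 1) = ((m + 1 : ℕ) : ℂ) := by push_cast; ring
      rw [e1, e2, Complex.norm_natCast, Complex.norm_natCast]
      push_cast
      ring
    rw [hden]
    have hnum : ‖6 * ∑ k ∈ Finset.range (m+1), pc z₀ a0 a1 k * pc z₀ a0 a1 (m - k)
        + (if m = 0 then z₀ else 0) + (if m = 1 then 1 else 0)‖
        ≤ 6 * (((m:ℝ) + 1) * P) + P + P := by
      calc ‖6 * ∑ k ∈ Finset.range (m+1), pc z₀ a0 a1 k * pc z₀ a0 a1 (m - k)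
            + (if m = 0 then z₀ else 0) + (if m = 1 then 1 else 0)‖
          ≤ ‖6 * ∑ k ∈ Finset.range (m+1), pc z₀ a0 a1 k * pc z₀ a0 a1 (m - k)
            + (if m = 0 then z₀ else 0)‖ + ‖(if m = 1 then (1:ℂ) else 0)‖ := norm_add_le _ _
        _ ≤ ‖6 * ∑ k ∈ Finset.range (m+1), pc z₀ a0 a1 k * pc z₀ a0 a1 (m - k)‖
            + ‖(if m = 0 then z₀ else 0 : ℂ)‖ + ‖(if m = 1 then (1:ℂ) else 0)‖ :=
            add_le_add_left (norm_add_le _ _) _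
        _ ≤ 6 * (((m:ℝ) + 1) * P) + P + P := by
            have h6 : ‖(6:ℂ) * ∑ k ∈ Finset.range (m+1), pc z₀ a0 a1 k * pc z₀ a0 a1 (m - k)‖
                ≤ 6 * (((m:ℝ) + 1) * P) := by
              rw [norm_mul]
              have : ‖(6:ℂ)‖ = 6 := by
                rw [show (6:ℂ) = ((6:ℕ):ℂ) by norm_num, Complex.norm_natCast]
                norm_num
              rw [this]
              exact mul_le_mul_of_nonneg_left hsum (by norm_num)
            exact add_le_add (add_le_add h6 hite1) hite2
    calc ‖6 * ∑ k ∈ Finset.range (m+1), pc z₀ a0 a1 k * pc z₀ a0 a1 (m - k)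
          + (if m = 0 then z₀ else 0) + (if m = 1 then 1 else 0)‖ / (((m:ℝ) + 2) * ((m:ℝ) + 1))
        ≤ (6 * (((m:ℝ) + 1) * P) + P + P) / (((m:ℝ) + 2) * ((m:ℝ) + 1)) := by
          gcongr
      _ ≤ M ^ 2 * (2 * M) ^ (m + 2) := by
          rw [div_le_iff₀ (by positivity)]
          have hm0 : (0:ℝ) ≤ (m:ℝ) := Nat.cast_nonneg m
          have : M ^ 2 * (2 * M) ^ (m + 2) = 4 * P := by
            rw [hPdef]
            ring
          rw [this]
          nlinarith [hP0, hm0, mul_nonneg (mul_nonneg hm0 hm0) hP0.le, mul_nonneg hm0 hP0.le]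

/-! ### From ODE to recursion and back -/

lemma norm_six : ‖(6:ℂ)‖ = 6 := by
  rw [show (6:ℂ) = ((6:ℕ):ℂ) by norm_num, Complex.norm_natCast]
  norm_num

lemma rhsCoef_bound {q : ℕ → ℂ} {A B : ℝ} (hB : 0 < B) (hq : ∀ n, ‖q n‖ ≤ A * B ^ n)
    (z₀ : ℂ) (n : ℕ) :
    ‖rhsCoef z₀ q n‖ ≤ (6 * A * A + ‖z₀‖ + (1 / (2 * B) + 1)) * (2 * B) ^ n := by
  have hA : 0 ≤ A := hA_nonneg hq
  have hpow : (0:ℝ) < (2 * B) ^ n := by positivity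
  have h1 : ‖(6:ℂ) * conv q n‖ ≤ 6 * A * A * (2 * B) ^ n := by
    rw [norm_mul, norm_six]
    calc 6 * ‖conv q n‖ ≤ 6 * ((A * A) * (2 * B) ^ n) :=
          mul_le_mul_of_nonneg_left (conv_bound hB hq n) (by norm_num)
      _ = 6 * A * A * (2 * B) ^ n := by ring
  have h2 : ‖(if n = 0 then z₀ else 0 : ℂ)‖ ≤ ‖z₀‖ * (2 * B) ^ n := by
    split
    · subst ‹n = 0›
      simp
    · simp
      positivity
  have h3 : ‖(if n = 1 then (1:ℂ) else 0)‖ ≤ (1 / (2 * B) + 1) * (2 * B) ^ n := by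
    split
    · subst ‹n = 1›
      simp only [norm_one, pow_one]
      have : (1 / (2 * B)) * (2 * B) = 1 := by field_simp
      nlinarith
    · simp
      positivity
  calc ‖rhsCoef z₀ q n‖ ≤ ‖(6:ℂ) * conv q n + (if n = 0 then z₀ else 0)‖
        + ‖(if n = 1 then (1:ℂ) else 0)‖ := norm_add_le _ _
    _ ≤ ‖(6:ℂ) * conv q n‖ + ‖(if n = 0 then z₀ else 0 : ℂ)‖
        + ‖(if n = 1 then (1:ℂ) else 0)‖ := add_le_add_left (norm_add_le _ _) _
    _ ≤ 6 * A * A * (2 * B) ^ n + ‖z₀‖ * (2 * B) ^ n + (1 / (2 * B) + 1) * (2 * B) ^ n :=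
        add_le_add (add_le_add h1 h2) h3
    _ = (6 * A * A + ‖z₀‖ + (1 / (2 * B) + 1)) * (2 * B) ^ n := by ring

lemma deriv2_coeff_bound {q : ℕ → ℂ} {A B : ℝ} (hB : 0 < B) (hq : ∀ n, ‖q n‖ ≤ A * B ^ n)
    (n : ℕ) : ‖((n:ℂ) + 1) * ((n:ℂ) + 2) * q (n + 2)‖ ≤ (A * B * (2 * B)) * (2 * (2 * B)) ^ n := by
  have h1 := shift_bound (by positivity : (0:ℝ) < 2 * B) (shift_bound hB hq) n
  calc ‖((n:ℂ) + 1) * ((n:ℂ) + 2) * q (n + 2)‖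
      = ‖((n:ℂ) + 1) * ((((n:ℕ)+1 : ℕ):ℂ) + 1) * q ((n + 1) + 1)‖ := by
        push_cast
        ring_nf
    _ = ‖((n:ℂ) + 1) * (((((n:ℕ)+1 : ℕ):ℂ) + 1) * q ((n + 1) + 1))‖ := by rw [mul_assoc]
    _ ≤ (A * B * (2 * B)) * (2 * (2 * B)) ^ n := h1

lemma ode_to_recursion {y : ℂ → ℂ} {q : ℕ → ℂ} {z₀ : ℂ} {A B δ₀ δ₁ : ℝ}
    (hB : 0 < B) (hq : ∀ n, ‖q n‖ ≤ A * B ^ n) (hδ₀ : 0 < δ₀) (hδ₁ : 0 < δ₁)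
    (hrepr : ∀ x : ℂ, ‖x - z₀‖ < δ₀ → y x = S q (x - z₀))
    (hode : ∀ x : ℂ, ‖x - z₀‖ < δ₁ → deriv (deriv y) x = 6 * (y x) ^ 2 + x) :
    ∀ n : ℕ, ((n:ℂ) + 1) * ((n:ℂ) + 2) * q (n + 2) = rhsCoef z₀ q n := by
  set F : ℂ → ℂ := fun w => S q (w - z₀) with hF
  have hset : IsOpen {t : ℂ | ‖t - z₀‖ < δ₀} := by
    have : {t : ℂ | ‖t - z₀‖ < δ₀} = Metric.ball z₀ δ₀ := by
      ext t
      simp [Metric.mem_ball, dist_eq_norm]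
    rw [this]
    exact Metric.isOpen_ball
  have hd1 : ∀ x : ℂ, ‖x - z₀‖ < δ₀ → deriv y x = deriv F x := by
    intro x hx
    apply Filter.EventuallyEq.deriv_eq
    filter_upwards [hset.mem_nhds hx] with t ht
    exact hrepr t ht
  have hd2 : ∀ x : ℂ, ‖x - z₀‖ < δ₀ → deriv (deriv y) x = deriv (deriv F) x := by
    intro x hx
    apply Filter.EventuallyEq.deriv_eq
    filter_upwards [hset.mem_nhds hx] with t ht
    exact hd1 t ht
  set δ : ℝ := min δ₀ (min δ₁ (1 / (4 * B))) with hδdef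
  have hδ : 0 < δ := lt_min hδ₀ (lt_min hδ₁ (by positivity))
  have key : ∀ w : ℂ, ‖w‖ < δ →
      S (fun n => ((n:ℂ) + 1) * ((n:ℂ) + 2) * q (n + 2)) w = S (rhsCoef z₀ q) w := by
    intro w hw
    have hw0 : ‖w‖ < δ₀ := lt_of_lt_of_le hw (min_le_left _ _)
    have hw1 : ‖w‖ < δ₁ := lt_of_lt_of_le hw ((min_le_right _ _).trans (min_le_left _ _))
    have hw4 : ‖w‖ < 1 / (4 * B) := lt_of_lt_of_le hw ((min_le_right _ _).trans (min_le_right _ _))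
    have hw2B : ‖w‖ * (2 * B) < 1 := by
      rw [lt_div_iff₀ (by positivity)] at hw4
      nlinarith [norm_nonneg w]
    set x : ℂ := z₀ + w with hxdef
    have hx : x - z₀ = w := by rw [hxdef]; ring
    have hxn : ‖x - z₀‖ < δ₀ := by rw [hx]; exact hw0
    calc S (fun n => ((n:ℂ) + 1) * ((n:ℂ) + 2) * q (n + 2)) w
        = deriv (deriv F) x := by rw [deriv2_S hB hq (by rw [hx]; exact hw2B), hx]
      _ = deriv (deriv y) x := (hd2 x hxn).symm
      _ = 6 * (y x) ^ 2 + x := hode x (by rw [hx]; exact hw1)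
      _ = 6 * (S q w) ^ 2 + (z₀ + w) := by rw [hrepr x hxn, hx, hxdef]
      _ = S (rhsCoef z₀ q) w := rhs_expand hB hq z₀ hw2B
  have := coeff_unique (by positivity : (0:ℝ) < 2 * (2 * B)) (by positivity : (0:ℝ) < 2 * B) hδ
    (deriv2_coeff_bound hB hq) (rhsCoef_bound hB hq z₀) key
  intro n
  exact congrFun this n

end P1Aux

open P1Aux

/-- Quantitative lower bound on the radius of analyticity of solutions of Painlevé I:
there is a universal `κ > 0` such that any local analytic solution near `z₀` extends
to an analytic solution on the disk of radius
`κ / max {1, |y(z₀)|^{1/2}, |y'(z₀)|^{1/3}, |z₀|^{1/4}}` about `z₀`. -/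
theorem painleveI_radius_lower_bound :
    ∃ κ : ℝ, 0 < κ ∧
      ∀ (z₀ : ℂ) (y : ℂ → ℂ),
        (∀ᶠ z in 𝓝 z₀, AnalyticAt ℂ y z ∧ deriv (deriv y) z = 6 * (y z) ^ 2 + z) →
        ∃ Y : ℂ → ℂ,
          (∀ z ∈ Metric.ball z₀
              (κ / max 1 (max (‖y z₀‖ ^ ((1:ℝ)/2))
                (max (‖deriv y z₀‖ ^ ((1:ℝ)/3)) (‖z₀‖ ^ ((1:ℝ)/4))))),
            AnalyticAt ℂ Y z ∧ deriv (deriv Y) z = 6 * (Y z) ^ 2 + z) ∧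
          (∀ᶠ z in 𝓝 z₀, Y z = y z) := by
  refine ⟨1/8, by norm_num, ?_⟩
  intro z₀ y hyp
  -- the scale M
  set M : ℝ := max 1 (max (‖y z₀‖ ^ ((1:ℝ)/2))
    (max (‖deriv y z₀‖ ^ ((1:ℝ)/3)) (‖z₀‖ ^ ((1:ℝ)/4)))) with hMdef
  have hM1 : 1 ≤ M := le_max_left _ _
  have hM0 : 0 < M := lt_of_lt_of_le one_pos hM1
  -- bounds on the initial data in terms of M
  have habs : ∀ x : ℂ, ‖x‖ = ‖x‖ := fun x => rfl
  have hy0 : ‖y z₀‖ ≤ M ^ 2 := by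
    have h : ‖y z₀‖ ^ ((1:ℝ)/2) ≤ M :=
      le_max_of_le_right (le_max_left _ _)
    have ht : (0:ℝ) ≤ ‖y z₀‖ := norm_nonneg _
    have : ‖y z₀‖ = (‖y z₀‖ ^ ((1:ℝ)/2)) ^ (2:ℕ) := by
      rw [← Real.rpow_natCast (‖y z₀‖ ^ ((1:ℝ)/2)) 2, ← Real.rpow_mul ht]
      norm_num
    rw [this]
    exact pow_le_pow_left₀ (Real.rpow_nonneg ht _) h 2
  have hy1 : ‖deriv y z₀‖ ≤ M ^ 3 := by
    have h : ‖deriv y z₀‖ ^ ((1:ℝ)/3) ≤ M :=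
      le_max_of_le_right (le_max_of_le_right (le_max_left _ _))
    have ht : (0:ℝ) ≤ ‖deriv y z₀‖ := norm_nonneg _
    have : ‖deriv y z₀‖ = (‖deriv y z₀‖ ^ ((1:ℝ)/3)) ^ (3:ℕ) := by
      rw [← Real.rpow_natCast (‖deriv y z₀‖ ^ ((1:ℝ)/3)) 3, ← Real.rpow_mul ht]
      norm_num
    rw [this]
    exact pow_le_pow_left₀ (Real.rpow_nonneg ht _) h 3
  have hz0M : ‖z₀‖ ≤ M ^ 4 := by
    have h : ‖z₀‖ ^ ((1:ℝ)/4) ≤ M :=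
      le_max_of_le_right (le_max_of_le_right (le_max_right _ _))
    have ht : (0:ℝ) ≤ ‖z₀‖ := norm_nonneg _
    have : ‖z₀‖ = (‖z₀‖ ^ ((1:ℝ)/4)) ^ (4:ℕ) := by
      rw [← Real.rpow_natCast (‖z₀‖ ^ ((1:ℝ)/4)) 4, ← Real.rpow_mul ht]
      norm_num
    rw [this]
    exact pow_le_pow_left₀ (Real.rpow_nonneg ht _) h 4
  -- the coefficients
  set a : ℕ → ℂ := pc z₀ (y z₀) (deriv y z₀) with hadef
  have ha : ∀ n, ‖a n‖ ≤ M ^ 2 * (2 * M) ^ n := pc_bound hM1 hy0 hy1 hz0M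
  have hB : (0:ℝ) < 2 * M := by positivity
  set Y : ℂ → ℂ := fun w => S a (w - z₀) with hYdef
  -- extract local data for y
  obtain ⟨r₁, hr₁, H⟩ := Metric.eventually_nhds_iff.mp hyp
  have hy_an : AnalyticAt ℂ y z₀ := (H (by simpa using hr₁)).1
  obtain ⟨p, hp⟩ := hy_an
  obtain ⟨C, r, hC, hr, hpb⟩ := p.le_mul_pow_of_radius_pos hp.radius_pos
  set q : ℕ → ℂ := fun n => p.coeff n with hqdef
  have hqb : ∀ n, ‖q n‖ ≤ C * r ^ n := by
    intro n
    rw [hqdef]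
    calc ‖p.coeff n‖ = ‖p n‖ := (FormalMultilinearSeries.norm_apply_eq_norm_coef (p := p) (n := n)).symm
      _ ≤ C * r ^ n := hpb n
  obtain ⟨δ₀, hδ₀, hsum⟩ := Metric.eventually_nhds_iff.mp (hasFPowerSeriesAt_iff.mp hp)
  have hrepr : ∀ x : ℂ, ‖x - z₀‖ < δ₀ → y x = S q (x - z₀) := by
    intro x hx
    have h := hsum (y := x - z₀) (by rwa [dist_zero_right])
    have h2 : z₀ + (x - z₀) = x := by ring
    rw [h2] at h
    rw [← h.tsum_eq]
    unfold S
    congr 1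
    ext n
    rw [smul_eq_mul]
    ring
  have hode : ∀ x : ℂ, ‖x - z₀‖ < r₁ → deriv (deriv y) x = 6 * (y x) ^ 2 + x := by
    intro x hx
    exact (H (by rwa [dist_eq_norm])).2
  -- y's coefficients satisfy the recursion, hence equal `a`
  have hrec := ode_to_recursion hr hqb hδ₀ hr₁ hrepr hode
  have hq0 : q 0 = y z₀ := by
    have := hrepr z₀ (by simpa using hδ₀)
    rw [sub_self, S_zero] at this
    exact this.symm
  have hq1 : q 1 = deriv y z₀ := hp.deriv.symm
  have hqa : ∀ n, q n = a n := pc_unique z₀ (y z₀) (deriv y z₀) q hq0 hq1 hrec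
  refine ⟨Y, ?_, ?_⟩
  · -- analytic + ODE on the ball
    intro z hz
    rw [Metric.mem_ball, dist_eq_norm] at hz
    have hzM : ‖z - z₀‖ < 1 / (8 * M) := by
      have : (1:ℝ)/8 / M = 1 / (8 * M) := by field_simp
      rwa [this] at hz
    have hz2B : ‖z - z₀‖ * (2 * (2 * M)) < 1 := by
      rw [lt_div_iff₀ (by positivity)] at hzM
      nlinarith [norm_nonneg (z - z₀)]
    constructor
    · -- analyticity
      have hdiff : DifferentiableOn ℂ Y (Metric.ball z₀ (1 / (2 * M))) := by
        intro x hx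
        rw [Metric.mem_ball, dist_eq_norm] at hx
        have : ‖x - z₀‖ * (2 * M) < 1 := by rwa [lt_div_iff₀ (by positivity)] at hx
        exact (hasDerivAt_S hB ha this).differentiableAt.differentiableWithinAt
      apply hdiff.analyticAt
      apply Metric.isOpen_ball.mem_nhds
      rw [Metric.mem_ball, dist_eq_norm]
      calc ‖z - z₀‖ < 1 / (8 * M) := hzM
        _ ≤ 1 / (2 * M) := one_div_le_one_div_of_le (by positivity) (by nlinarith)
    · -- the ODE
      rw [hYdef]
      have h1 := deriv2_S hB ha hz2B
      rw [h1]
      have h2 : (fun n : ℕ => ((n:ℂ) + 1) * ((n:ℂ) + 2) * a (n + 2)) = rhsCoef z₀ a :=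
        funext fun n => pc_recursion z₀ (y z₀) (deriv y z₀) n
      rw [h2, ← rhs_expand hB ha z₀ hz2B]
      have h3 : z₀ + (z - z₀) = z := by ring
      rw [h3]
  · -- eventual equality
    have hball := Metric.ball_mem_nhds z₀ hδ₀
    filter_upwards [hball] with z hz
    rw [Metric.mem_ball, dist_eq_norm] at hz
    rw [hYdef]
    have := hrepr z hz
    rw [this]
    exact congrFun (congrArg S (funext fun n => (hqa n).symm)) (z - z₀)
end
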